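/- arXiv:2307.10080 — 5 statements merged into one kernel-verified Lean document; each statement's English description precedes it below -/
import Mathlib

section
/- Let X₁,…,X_K be i.i.d. with PMF P_X over the finite alphabet 𝒳, let π ∈ S_K be a cycle of length K, and set X̃_j := X_{π(j)} for j ∈ [K]. Then E[ exp( −Σ_{j∈[K]} d(X_j, X̃_j) ) ] ≤ e^{−K·ψ₂(P_XY)}. -/
open Real BigOperators Finset
open scoped Classical

noncomputable section

/-- A probability mass function on a finite alphabet, as a real-valued function. -/
def IsPMF {α : Type*} [Fintype α] (P : α → ℝ) : Prop :=
  (∀ a, 0 ≤ P a) ∧ ∑ a, P a = 1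

/-- The Bhattacharyya distance between two input symbols of the channel `W`. -/
def bhat {𝒳 𝒴 : Type*} [Fintype 𝒴] (W : 𝒳 → 𝒴 → ℝ) (x₁ x₂ : 𝒳) : ℝ :=
  - Real.log (∑ y, Real.sqrt (W x₁ y * W x₂ y))

/-- The Bhattacharyya distance of a joint PMF `Q` on `𝒳 × 𝒳`. -/
def dQ {𝒳 𝒴 : Type*} [Fintype 𝒳] [Fintype 𝒴] (W : 𝒳 → 𝒴 → ℝ) (Q : 𝒳 × 𝒳 → ℝ) : ℝ :=
  ∑ p : 𝒳 × 𝒳, Q p * bhat W p.1 p.2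

/-- Kullback-Leibler divergence between PMFs on a finite alphabet
(with the conventions `0 log 0 = 0`, valid since `Real.log 0 = 0` in Lean). -/
def klD {α : Type*} [Fintype α] (Q P : α → ℝ) : ℝ :=
  ∑ a, Q a * Real.log (Q a / P a)

/-- The rate function `ψ₂(P_XY)`. -/
def psi2 {𝒳 𝒴 : Type*} [Fintype 𝒳] [Fintype 𝒴] (P : 𝒳 → ℝ) (W : 𝒳 → 𝒴 → ℝ) : ℝ :=
  sInf { v : ℝ | ∃ Q : 𝒳 × 𝒳 → ℝ, IsPMF Q ∧
    v = (1/2) * klD Q (fun p => P p.1 * P p.2) + dQ W Q }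

namespace BhatAuxiliary

variable {𝒳 : Type*} [Fintype 𝒳]

/-! ### Frobenius-norm bounds on traces of matrix powers -/

/-- Squared Frobenius norm of a matrix. -/
def frob (A : Matrix 𝒳 𝒳 ℝ) : ℝ := ∑ a, ∑ b, (A a b) ^ 2

lemma frob_nonneg (A : Matrix 𝒳 𝒳 ℝ) : 0 ≤ frob A :=
  Finset.sum_nonneg fun _ _ => Finset.sum_nonneg fun _ _ => sq_nonneg _

lemma frob_mul_le (A B : Matrix 𝒳 𝒳 ℝ) : frob (A * B) ≤ frob A * frob B := by
  have h : ∀ a c, ((A * B) a c) ^ 2 ≤ (∑ b, (A a b) ^ 2) * (∑ b, (B b c) ^ 2) := by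
    intro a c
    rw [Matrix.mul_apply]
    exact Finset.sum_mul_sq_le_sq_mul_sq _ _ _
  calc frob (A * B) ≤ ∑ a, ∑ c, (∑ b, (A a b) ^ 2) * (∑ b, (B b c) ^ 2) :=
        Finset.sum_le_sum fun a _ => Finset.sum_le_sum fun c _ => h a c
    _ = frob A * frob B := by
        rw [frob, frob, Finset.sum_mul]
        refine Finset.sum_congr rfl fun a _ => ?_
        rw [← Finset.mul_sum, Finset.sum_comm]

lemma frob_pow_le (A : Matrix 𝒳 𝒳 ℝ) : ∀ n : ℕ, 1 ≤ n → frob (A ^ n) ≤ (frob A) ^ n := by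
  intro n
  induction n with
  | zero => omega
  | succ m ih =>
    intro _
    rcases Nat.eq_zero_or_pos m with hm | hm
    · subst hm; simp [pow_one]
    · calc frob (A ^ (m + 1)) = frob (A ^ m * A) := by rw [pow_succ]
        _ ≤ frob (A ^ m) * frob A := frob_mul_le _ _
        _ ≤ (frob A) ^ m * frob A :=
            mul_le_mul_of_nonneg_right (ih hm) (frob_nonneg A)
        _ = (frob A) ^ (m + 1) := by rw [pow_succ]

lemma entry_pow_nonneg (A : Matrix 𝒳 𝒳 ℝ) (hA : ∀ a b, 0 ≤ A a b) (n : ℕ) (hn : 1 ≤ n) :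
    ∀ a b, 0 ≤ (A ^ n) a b := by
  induction n with
  | zero => omega
  | succ m ih =>
    intro a b
    rcases Nat.eq_zero_or_pos m with hm | hm
    · subst hm; simpa [pow_one] using hA a b
    · rw [pow_succ, Matrix.mul_apply]
      exact Finset.sum_nonneg fun c _ => mul_nonneg (ih hm a c) (hA c b)

lemma trace_pow_le (A : Matrix 𝒳 𝒳 ℝ) (hA : ∀ a b, 0 ≤ A a b) (K : ℕ) (hK : 2 ≤ K) :
    (A ^ K).trace ≤ Real.sqrt (frob A) ^ K := by
  have htr : (A ^ K).trace = ∑ a, ∑ b, A a b * (A ^ (K - 1)) b a := by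
    have : A ^ K = A * A ^ (K - 1) := by
      rw [← pow_succ']
      congr 1
      omega
    rw [this, Matrix.trace, Finset.sum_congr rfl]
    intro a _
    rw [Matrix.diag_apply, Matrix.mul_apply]
  have htr0 : 0 ≤ (A ^ K).trace := by
    rw [htr]
    exact Finset.sum_nonneg fun a _ => Finset.sum_nonneg fun b _ =>
      mul_nonneg (hA a b) (entry_pow_nonneg A hA (K - 1) (by omega) b a)
  have hcs : ((A ^ K).trace) ^ 2 ≤ frob A * frob (A ^ (K - 1)) := by
    rw [htr]
    have h1 : (∑ p : 𝒳 × 𝒳, A p.1 p.2 * (A ^ (K - 1)) p.2 p.1) ^ 2 ≤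
        (∑ p : 𝒳 × 𝒳, (A p.1 p.2) ^ 2) * (∑ p : 𝒳 × 𝒳, ((A ^ (K - 1)) p.2 p.1) ^ 2) :=
      Finset.sum_mul_sq_le_sq_mul_sq _ _ _
    rw [Fintype.sum_prod_type] at h1
    have h2 : (∑ p : 𝒳 × 𝒳, (A p.1 p.2) ^ 2) = frob A := by
      rw [Fintype.sum_prod_type]; rfl
    have h3 : (∑ p : 𝒳 × 𝒳, ((A ^ (K - 1)) p.2 p.1) ^ 2) = frob (A ^ (K - 1)) := by
      rw [Fintype.sum_prod_type, frob, Finset.sum_comm]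
    rw [h2, h3] at h1
    exact h1
  have hfp : frob (A ^ (K - 1)) ≤ (frob A) ^ (K - 1) := frob_pow_le A (K - 1) (by omega)
  have hsq : ((A ^ K).trace) ^ 2 ≤ (frob A) ^ K := by
    calc ((A ^ K).trace) ^ 2 ≤ frob A * frob (A ^ (K - 1)) := hcs
      _ ≤ frob A * (frob A) ^ (K - 1) :=
          mul_le_mul_of_nonneg_left hfp (frob_nonneg A)
      _ = (frob A) ^ K := by
          rw [← pow_succ']
          congr 1
          omega
  have hpow : (Real.sqrt (frob A) ^ K) ^ 2 = (frob A) ^ K := by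
    rw [← pow_mul, mul_comm K 2, pow_mul, Real.sq_sqrt (frob_nonneg A)]
  nlinarith [Real.sqrt_nonneg (frob A), pow_nonneg (Real.sqrt_nonneg (frob A)) K, hsq, hpow]

/-! ### Trace of a power as a sum over cyclic walks -/

/-- Product of matrix entries along a walk `a, y 0, y 1, …, y (n-1), b`. -/
def chain (A : Matrix 𝒳 𝒳 ℝ) : (n : ℕ) → 𝒳 → (Fin n → 𝒳) → 𝒳 → ℝ
  | 0, a, _, b => A a b
  | n + 1, a, y, b => A a (y 0) * chain A n (y 0) (Fin.tail y) b

lemma sum_pi_cons (n : ℕ) (f : (Fin (n + 1) → 𝒳) → ℝ) :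
    ∑ y : Fin (n + 1) → 𝒳, f y = ∑ c : 𝒳, ∑ y : Fin n → 𝒳, f (Fin.cons c y) := by
  have h := Fintype.sum_equiv (Fin.consEquiv fun _ : Fin (n + 1) => 𝒳)
    (fun p : 𝒳 × (Fin n → 𝒳) => f (Fin.cons p.1 p.2)) f (fun p => by simp [Fin.consEquiv])
  rw [← h, Fintype.sum_prod_type]

lemma pow_apply_eq_sum_chain (A : Matrix 𝒳 𝒳 ℝ) :
    ∀ (n : ℕ) (a b : 𝒳), (A ^ (n + 1)) a b = ∑ y : Fin n → 𝒳, chain A n a y b := by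
  intro n
  induction n with
  | zero =>
    intro a b
    simp [chain, pow_one]
  | succ m ih =>
    intro a b
    rw [sum_pi_cons m (fun y => chain A (m + 1) a y b)]
    have : A ^ (m + 1 + 1) = A * A ^ (m + 1) := by rw [← pow_succ']
    rw [this, Matrix.mul_apply]
    refine Finset.sum_congr rfl fun c _ => ?_
    rw [ih c b, Finset.mul_sum]
    refine Finset.sum_congr rfl fun y _ => ?_
    simp [chain, Fin.tail_cons]

lemma chain_eq_prod (A : Matrix 𝒳 𝒳 ℝ) :
    ∀ (n : ℕ) (z : Fin (n + 1) → 𝒳) (b : 𝒳),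
      chain A n (z 0) (Fin.tail z) b =
        (∏ i : Fin n, A (z i.castSucc) (z i.succ)) * A (z (Fin.last n)) b := by
  intro n
  induction n with
  | zero =>
    intro z b
    simp [chain, Fin.last]
  | succ m ih =>
    intro z b
    have h1 : chain A (m + 1) (z 0) (Fin.tail z) b =
        A (z 0) ((Fin.tail z) 0) * chain A m ((Fin.tail z) 0) (Fin.tail (Fin.tail z)) b := rfl
    rw [h1, ih (Fin.tail z) b,
      Fin.prod_univ_succ (fun i : Fin (m + 1) => A (z i.castSucc) (z i.succ))]
    simp only [Fin.castSucc_zero, Fin.succ_zero_eq_one, Fin.tail, ← Fin.succ_castSucc,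
      Fin.succ_last]
    ring

lemma trace_pow_eq (A : Matrix 𝒳 𝒳 ℝ) (n : ℕ) :
    (A ^ (n + 1)).trace = ∑ z : Fin (n + 1) → 𝒳, ∏ i, A (z i) (z (i + 1)) := by
  have h1 : (A ^ (n + 1)).trace = ∑ a, ∑ y : Fin n → 𝒳, chain A n a y a := by
    rw [Matrix.trace]
    exact Finset.sum_congr rfl fun a _ => pow_apply_eq_sum_chain A n a a
  have h2 : ∑ z : Fin (n + 1) → 𝒳, chain A n (z 0) (Fin.tail z) (z 0)
      = ∑ a, ∑ y : Fin n → 𝒳, chain A n a y a := by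
    rw [sum_pi_cons n (fun z => chain A n (z 0) (Fin.tail z) (z 0))]
    refine Finset.sum_congr rfl fun c _ => Finset.sum_congr rfl fun y _ => ?_
    simp [Fin.cons_zero, Fin.tail_cons]
  rw [h1, ← h2]
  refine Finset.sum_congr rfl fun z _ => ?_
  rw [chain_eq_prod A n z (z 0),
    Fin.prod_univ_castSucc (fun i : Fin (n + 1) => A (z i) (z (i + 1)))]
  simp [Fin.coeSucc_eq_succ, Fin.last_add_one]

/-! ### Reindexing a full cycle to the standard rotation -/

lemma cycle_sum_eq (A : Matrix 𝒳 𝒳 ℝ) (n : ℕ) (hn : 1 ≤ n)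
    (τ : Equiv.Perm (Fin (n + 1))) (hcyc : τ.IsCycle) (hfull : τ.support = Finset.univ) :
    ∑ x : Fin (n + 1) → 𝒳, ∏ j, A (x j) (x (τ j))
      = ∑ z : Fin (n + 1) → 𝒳, ∏ i, A (z i) (z (i + 1)) := by
  have horder : orderOf τ = n + 1 := by
    rw [hcyc.orderOf, hfull, Finset.card_univ, Fintype.card_fin]
  set j₀ : Fin (n + 1) := 0 with hj₀
  have hx : τ j₀ ≠ j₀ := by
    have : j₀ ∈ τ.support := by rw [hfull]; exact Finset.mem_univ _
    exact Equiv.Perm.mem_support.mp this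
  set g : Fin (n + 1) → Fin (n + 1) := fun i => (τ ^ (i : ℕ)) j₀ with hg
  have hginj : Function.Injective g := by
    intro i i' h
    have hpow : τ ^ (i : ℕ) = τ ^ (i' : ℕ) := hcyc.pow_eq_pow_iff.mpr ⟨j₀, hx, h⟩
    have hmod : (i : ℕ) % orderOf τ = (i' : ℕ) % orderOf τ := pow_eq_pow_iff_modEq.mp hpow
    rw [horder, Nat.mod_eq_of_lt i.isLt, Nat.mod_eq_of_lt i'.isLt] at hmod
    exact Fin.ext hmod
  set e : Fin (n + 1) ≃ Fin (n + 1) :=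
    Equiv.ofBijective g (Finite.injective_iff_bijective.mp hginj) with he
  have hkey : ∀ i : Fin (n + 1), e (i + 1) = τ (e i) := by
    intro i
    have hval : ((i + 1 : Fin (n + 1)) : ℕ) = ((i : ℕ) + 1) % (n + 1) := by
      rw [Fin.add_def, Fin.val_one', Nat.mod_eq_of_lt (show 1 < n + 1 by omega)]
    show g (i + 1) = τ (g i)
    rw [hg]
    simp only []
    have hp := pow_mod_orderOf τ ((i : ℕ) + 1)
    rw [horder] at hp
    rw [hval, hp, pow_succ']
    rfl
  calc ∑ x : Fin (n + 1) → 𝒳, ∏ j, A (x j) (x (τ j))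
      = ∑ x : Fin (n + 1) → 𝒳, ∏ i, A (x (e i)) (x (e (i + 1))) := by
        refine Finset.sum_congr rfl fun x _ => ?_
        rw [← Equiv.prod_comp e (fun j => A (x j) (x (τ j)))]
        exact Finset.prod_congr rfl fun i _ => by rw [hkey i]
    _ = ∑ z : Fin (n + 1) → 𝒳, ∏ i, A (z i) (z (i + 1)) := by
        have h := Equiv.sum_comp (Equiv.arrowCongr e.symm (Equiv.refl 𝒳))
          (fun z : Fin (n + 1) → 𝒳 => ∏ i, A (z i) (z (i + 1)))
        rw [← h]
        refine Finset.sum_congr rfl fun x _ => Finset.prod_congr rfl fun i _ => by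
          simp [Equiv.arrowCongr]

/-! ### Nonnegativity facts -/

lemma bhat_nonneg {𝒳' 𝒴 : Type*} [Fintype 𝒴] (W : 𝒳' → 𝒴 → ℝ) (hW : ∀ x, IsPMF (W x))
    (x₁ x₂ : 𝒳') : 0 ≤ bhat W x₁ x₂ := by
  set s : ℝ := ∑ y, Real.sqrt (W x₁ y * W x₂ y) with hs
  have hs0 : 0 ≤ s := Finset.sum_nonneg fun y _ => Real.sqrt_nonneg _
  have hsq : s ^ 2 ≤ 1 := by
    have h1 : s = ∑ y, Real.sqrt (W x₁ y) * Real.sqrt (W x₂ y) := by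
      rw [hs]
      exact Finset.sum_congr rfl fun y _ => Real.sqrt_mul ((hW x₁).1 y) _
    have h2 := Finset.sum_mul_sq_le_sq_mul_sq Finset.univ
      (fun y => Real.sqrt (W x₁ y)) (fun y => Real.sqrt (W x₂ y))
    rw [h1]
    calc (∑ y, Real.sqrt (W x₁ y) * Real.sqrt (W x₂ y)) ^ 2
        ≤ (∑ y, Real.sqrt (W x₁ y) ^ 2) * ∑ y, Real.sqrt (W x₂ y) ^ 2 := h2
      _ = 1 := by
          rw [Finset.sum_congr rfl fun y _ => Real.sq_sqrt ((hW x₁).1 y),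
            Finset.sum_congr rfl fun y _ => Real.sq_sqrt ((hW x₂).1 y),
            (hW x₁).2, (hW x₂).2, mul_one]
  have hle1 : s ≤ 1 := by nlinarith
  have := Real.log_nonpos hs0 hle1
  rw [bhat]
  linarith

lemma klD_nonneg {α : Type*} [Fintype α] {Q R : α → ℝ} (hQ : IsPMF Q)
    (hR0 : ∀ a, 0 < R a) (hR1 : ∑ a, R a = 1) : 0 ≤ klD Q R := by
  have key : ∀ a, Q a - R a ≤ Q a * Real.log (Q a / R a) := by
    intro a
    rcases eq_or_lt_of_le (hQ.1 a) with h | h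
    · rw [← h]
      simp
      linarith [(hR0 a).le]
    · have hlog : Real.log (R a / Q a) ≤ R a / Q a - 1 :=
        Real.log_le_sub_one_of_pos (div_pos (hR0 a) h)
      have hinv : Real.log (Q a / R a) = - Real.log (R a / Q a) := by
        rw [← Real.log_inv]
        congr 1
        field_simp
      have h2 : Q a * (R a / Q a - 1) = R a - Q a := by field_simp
      nlinarith [mul_le_mul_of_nonneg_left hlog h.le]
  have hsum : ∑ a, (Q a - R a) ≤ ∑ a, Q a * Real.log (Q a / R a) :=
    Finset.sum_le_sum fun a _ => key a
  rw [Finset.sum_sub_distrib, hQ.2, hR1] at hsum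
  simpa [klD] using hsum

end BhatAuxiliary

open BhatAuxiliary

/-- Lemma: Bhattacharyya bound rate: for `X₁,…,X_K` i.i.d. `P_X` and a
cycle `τ` of length `K`, `E[exp(-Σ_j d(X_j, X_{τ(j)}))] ≤ exp(-K·ψ₂(P_XY))`. -/
theorem expected_bhat_cycle_le {𝒳 𝒴 : Type*} [Fintype 𝒳] [Fintype 𝒴]
    (P : 𝒳 → ℝ) (W : 𝒳 → 𝒴 → ℝ)
    (hP : IsPMF P) (hPpos : ∀ x, 0 < P x) (hW : ∀ x, IsPMF (W x))
    (K : ℕ) (τ : Equiv.Perm (Fin K)) (hcyc : τ.IsCycle)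
    (hfull : τ.support = Finset.univ) :
    ∑ x : Fin K → 𝒳, (∏ j, P (x j)) *
        Real.exp (- ∑ j, bhat W (x j) (x (τ j)))
      ≤ Real.exp (-(K : ℝ) * psi2 P W) := by
  classical
  obtain ⟨hP0, hP1⟩ := hP
  have hK2 : 2 ≤ K := by
    have h1 := hcyc.two_le_card_support
    rwa [hfull, Finset.card_univ, Fintype.card_fin] at h1
  have hXne : Nonempty 𝒳 := by
    by_contra h
    rw [not_nonempty_iff] at h
    rw [Finset.univ_eq_empty, Finset.sum_empty] at hP1
    norm_num at hP1
  obtain ⟨n, rfl⟩ : ∃ n, K = n + 1 := ⟨K - 1, by omega⟩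
  have hn : 1 ≤ n := by omega
  set A : Matrix 𝒳 𝒳 ℝ :=
    Matrix.of fun a b => Real.sqrt (P a * P b) * Real.exp (-(bhat W a b)) with hAdef
  have hAapp : ∀ a b, A a b = Real.sqrt (P a * P b) * Real.exp (-(bhat W a b)) :=
    fun a b => rfl
  have hAnn : ∀ a b, 0 ≤ A a b :=
    fun a b => mul_nonneg (Real.sqrt_nonneg _) (Real.exp_pos _).le
  have hApos : ∀ a b, 0 < A a b := fun a b =>
    mul_pos (Real.sqrt_pos.mpr (mul_pos (hPpos a) (hPpos b))) (Real.exp_pos _)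
  set S : ℝ := frob A with hSdef
  have hSpos : 0 < S := by
    rw [hSdef, frob]
    exact Finset.sum_pos
      (fun a _ => Finset.sum_pos (fun b _ => pow_pos (hApos a b) 2) Finset.univ_nonempty)
      Finset.univ_nonempty
  -- Step 1: the expectation is the trace of `A ^ (n+1)`.
  have hstep1 : ∑ x : Fin (n + 1) → 𝒳, (∏ j, P (x j)) *
      Real.exp (- ∑ j, bhat W (x j) (x (τ j)))
        = ∑ x : Fin (n + 1) → 𝒳, ∏ j, A (x j) (x (τ j)) := by
    refine Finset.sum_congr rfl fun x _ => ?_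
    have hexp : Real.exp (- ∑ j, bhat W (x j) (x (τ j)))
        = ∏ j, Real.exp (-(bhat W (x j) (x (τ j)))) := by
      rw [← Real.exp_sum]
      congr 1
      rw [Finset.sum_neg_distrib]
    have hprod : (∏ j, P (x j)) = ∏ j, Real.sqrt (P (x j) * P (x (τ j))) := by
      rw [Finset.prod_congr rfl fun j _ => Real.sqrt_mul (hP0 (x j)) (P (x (τ j))),
        Finset.prod_mul_distrib,
        Equiv.prod_comp τ (fun j => Real.sqrt (P (x j))),
        ← Finset.prod_mul_distrib]
      exact Finset.prod_congr rfl fun j _ => (Real.mul_self_sqrt (hP0 (x j))).symm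
    rw [hexp, hprod, ← Finset.prod_mul_distrib]
    exact Finset.prod_congr rfl fun j _ => (hAapp _ _).symm
  have hstep2 : ∑ x : Fin (n + 1) → 𝒳, ∏ j, A (x j) (x (τ j)) = (A ^ (n + 1)).trace := by
    rw [cycle_sum_eq A n hn τ hcyc hfull, trace_pow_eq A n]
  have hstep3 : (A ^ (n + 1)).trace ≤ Real.sqrt S ^ (n + 1) :=
    trace_pow_le A hAnn (n + 1) (by omega)
  -- Step 4: the Frobenius bound equals `exp (-(K) * v)` for the PMF `Q* ∝ A²`.
  set Q : 𝒳 × 𝒳 → ℝ := fun p => (A p.1 p.2) ^ 2 / S with hQdef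
  have hQpmf : IsPMF Q := by
    constructor
    · intro p
      exact div_nonneg (sq_nonneg _) hSpos.le
    · rw [hQdef, ← Finset.sum_div]
      rw [show (∑ p : 𝒳 × 𝒳, (A p.1 p.2) ^ 2) = S from by
        rw [hSdef, frob, Fintype.sum_prod_type]]
      field_simp
  have hAsq : ∀ p : 𝒳 × 𝒳, (A p.1 p.2) ^ 2
      = (P p.1 * P p.2) * Real.exp (-(2 * bhat W p.1 p.2)) := by
    intro p
    have hexp2 : Real.exp (-(bhat W p.1 p.2)) ^ 2 = Real.exp (-(2 * bhat W p.1 p.2)) := by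
      rw [sq, ← Real.exp_add]
      congr 1
      ring
    rw [hAapp, mul_pow, Real.sq_sqrt (mul_nonneg (hP0 p.1) (hP0 p.2)), hexp2]
  have hkl : klD Q (fun p : 𝒳 × 𝒳 => P p.1 * P p.2) = -2 * dQ W Q - Real.log S := by
    have hterm : ∀ p : 𝒳 × 𝒳, Real.log (Q p / (P p.1 * P p.2))
        = -(2 * bhat W p.1 p.2) - Real.log S := by
      intro p
      have hPP : P p.1 * P p.2 ≠ 0 := (mul_pos (hPpos p.1) (hPpos p.2)).ne'
      have hq : Q p / (P p.1 * P p.2) = Real.exp (-(2 * bhat W p.1 p.2)) / S := by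
        rw [hQdef]
        simp only []
        rw [hAsq p]
        field_simp
        field_simp [(hPpos p.1).ne', (hPpos p.2).ne']
      rw [hq, Real.log_div (Real.exp_ne_zero _) hSpos.ne', Real.log_exp]
    rw [klD, Finset.sum_congr rfl fun p _ => by rw [hterm p]]
    have hsplit : ∑ p : 𝒳 × 𝒳, Q p * (-(2 * bhat W p.1 p.2) - Real.log S)
        = -2 * (∑ p : 𝒳 × 𝒳, Q p * bhat W p.1 p.2) - (∑ p : 𝒳 × 𝒳, Q p) * Real.log S := by
      calc ∑ p : 𝒳 × 𝒳, Q p * (-(2 * bhat W p.1 p.2) - Real.log S)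
          = ∑ p : 𝒳 × 𝒳, (-2 * (Q p * bhat W p.1 p.2) - Q p * Real.log S) :=
            Finset.sum_congr rfl fun p _ => by ring
        _ = -2 * (∑ p : 𝒳 × 𝒳, Q p * bhat W p.1 p.2) - (∑ p : 𝒳 × 𝒳, Q p) * Real.log S := by
            rw [Finset.sum_sub_distrib, ← Finset.mul_sum, ← Finset.sum_mul]
    rw [hsplit, hQpmf.2, dQ]
    ring
  have hv : (1/2) * klD Q (fun p : 𝒳 × 𝒳 => P p.1 * P p.2) + dQ W Q
      = -(1/2) * Real.log S := by
    rw [hkl]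
    ring
  have hbdd : BddBelow { v : ℝ | ∃ Q' : 𝒳 × 𝒳 → ℝ, IsPMF Q' ∧
      v = (1/2) * klD Q' (fun p => P p.1 * P p.2) + dQ W Q' } := by
    refine ⟨0, fun v hv' => ?_⟩
    obtain ⟨Q', hQ', rfl⟩ := hv'
    have h1 : 0 ≤ klD Q' (fun p : 𝒳 × 𝒳 => P p.1 * P p.2) := by
      refine klD_nonneg hQ' (fun p => mul_pos (hPpos p.1) (hPpos p.2)) ?_
      rw [Fintype.sum_prod_type, ← Finset.sum_mul_sum, hP1, one_mul]
    have h2 : 0 ≤ dQ W Q' :=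
      Finset.sum_nonneg fun p _ => mul_nonneg (hQ'.1 p) (bhat_nonneg W hW p.1 p.2)
    linarith
  have hpsi : psi2 P W ≤ -(1/2) * Real.log S := by
    apply csInf_le hbdd
    exact ⟨Q, hQpmf, hv.symm⟩
  have hfin : Real.sqrt S ^ (n + 1)
      = Real.exp (-((n + 1 : ℕ) : ℝ) * (-(1/2) * Real.log S)) := by
    have h1 : -((n + 1 : ℕ) : ℝ) * (-(1/2) * Real.log S)
        = ((n + 1 : ℕ) : ℝ) * Real.log (Real.sqrt S) := by
      rw [Real.log_sqrt hSpos.le]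
      ring
    rw [h1, Real.exp_nat_mul, Real.exp_log (Real.sqrt_pos.mpr hSpos)]
  rw [hstep1, hstep2]
  calc (A ^ (n + 1)).trace ≤ Real.sqrt S ^ (n + 1) := hstep3
    _ = Real.exp (-((n + 1 : ℕ) : ℝ) * (-(1/2) * Real.log S)) := hfin
    _ ≤ Real.exp (-((n + 1 : ℕ) : ℝ) * psi2 P W) := by
        apply Real.exp_le_exp.mpr
        have hk0 : (0:ℝ) ≤ ((n + 1 : ℕ) : ℝ) := by positivity
        nlinarith [hpsi, hk0]
end
end

section
/- It holds that ψ₃(P_XY) ≥ ψ₂(P_XY): min over joint PMFs Q on 𝒳³ of (1/3)·D_KL(Q ‖ P_X^{⊗3}) + (1/3)·[d(Q_{X₁X₂}) + d(Q_{X₂X₃}) + d(Q_{X₁X₃})] is at least min over joint PMFs Q' on 𝒳² of (1/2)·D_KL(Q' ‖ P_X⊗P_X) + d(Q'). (Proved via Han's inequality for the Kullback–Leibler divergence.) -/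
open Real BigOperators Finset
open scoped Classical

set_option maxHeartbeats 1000000

noncomputable section

/-- The `(1,2)`-pair marginal of a joint PMF on `𝒳³`. -/
def marg12 {𝒳 : Type*} [Fintype 𝒳] (Q : 𝒳 × 𝒳 × 𝒳 → ℝ) : 𝒳 × 𝒳 → ℝ :=
  fun p => ∑ x₃, Q (p.1, p.2, x₃)

/-- The `(2,3)`-pair marginal of a joint PMF on `𝒳³`. -/
def marg23 {𝒳 : Type*} [Fintype 𝒳] (Q : 𝒳 × 𝒳 × 𝒳 → ℝ) : 𝒳 × 𝒳 → ℝ :=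
  fun p => ∑ x₁, Q (x₁, p.1, p.2)

/-- The `(1,3)`-pair marginal of a joint PMF on `𝒳³`. -/
def marg13 {𝒳 : Type*} [Fintype 𝒳] (Q : 𝒳 × 𝒳 × 𝒳 → ℝ) : 𝒳 × 𝒳 → ℝ :=
  fun p => ∑ x₂, Q (p.1, x₂, p.2)

/-- The rate function `ψ₃(P_XY)` for 3-cycles. -/
def psi3 {𝒳 𝒴 : Type*} [Fintype 𝒳] [Fintype 𝒴] (P : 𝒳 → ℝ) (W : 𝒳 → 𝒴 → ℝ) : ℝ :=
  sInf { v : ℝ | ∃ Q : 𝒳 × 𝒳 × 𝒳 → ℝ, IsPMF Q ∧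
    v = (1/3) * klD Q (fun z => P z.1 * P z.2.1 * P z.2.2)
      + (1/3) * (dQ W (marg12 Q) + dQ W (marg23 Q) + dQ W (marg13 Q)) }

/-! ### Auxiliary lemmas -/

/-- Cauchy–Schwarz for square roots. -/
lemma sum_sqrt_mul_sqrt_le {ι : Type*} (s : Finset ι) (a b : ι → ℝ)
    (ha : ∀ i ∈ s, 0 ≤ a i) (hb : ∀ i ∈ s, 0 ≤ b i) :
    ∑ i ∈ s, Real.sqrt (a i) * Real.sqrt (b i)
      ≤ Real.sqrt (∑ i ∈ s, a i) * Real.sqrt (∑ i ∈ s, b i) := by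
  have h := Finset.sum_mul_sq_le_sq_mul_sq s (fun i => Real.sqrt (a i)) (fun i => Real.sqrt (b i))
  have h1 : ∑ i ∈ s, Real.sqrt (a i) ^ 2 = ∑ i ∈ s, a i :=
    Finset.sum_congr rfl fun i hi => Real.sq_sqrt (ha i hi)
  have h2 : ∑ i ∈ s, Real.sqrt (b i) ^ 2 = ∑ i ∈ s, b i :=
    Finset.sum_congr rfl fun i hi => Real.sq_sqrt (hb i hi)
  rw [h1, h2] at h
  have hS : 0 ≤ ∑ i ∈ s, Real.sqrt (a i) * Real.sqrt (b i) :=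
    Finset.sum_nonneg fun i _ => mul_nonneg (Real.sqrt_nonneg _) (Real.sqrt_nonneg _)
  rw [← Real.sqrt_mul (Finset.sum_nonneg ha)]
  exact (Real.le_sqrt hS (mul_nonneg (Finset.sum_nonneg ha) (Finset.sum_nonneg hb))).2 h

/-- Gibbs-type inequality, via `log x ≤ x - 1`. -/
lemma gibbs_le {α : Type*} [Fintype α] (Q R : α → ℝ) (hQ : ∀ a, 0 ≤ Q a)
    (hR : ∀ a, 0 ≤ R a) (hQR : ∀ a, 0 < Q a → 0 < R a) :
    ∑ a, Q a * Real.log (R a / Q a) ≤ (∑ a, R a) - ∑ a, Q a := by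
  rw [← Finset.sum_sub_distrib]
  apply Finset.sum_le_sum
  intro x _
  obtain h | h := eq_or_lt_of_le (hQ x)
  · rw [← h]; simpa using hR x
  · have hRx := hQR x h
    have hle := Real.log_le_sub_one_of_pos (div_pos hRx h)
    calc Q x * Real.log (R x / Q x) ≤ Q x * (R x / Q x - 1) :=
          mul_le_mul_of_nonneg_left hle h.le
      _ = R x - Q x := by field_simp

/-- KL divergence against a positive PMF is nonnegative. -/
lemma klD_nonneg {α : Type*} [Fintype α] (Q R : α → ℝ) (hQ : IsPMF Q)
    (hRpos : ∀ a, 0 < R a) (hRsum : ∑ a, R a = 1) : 0 ≤ klD Q R := by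
  have key : klD Q R = - ∑ a, Q a * Real.log (R a / Q a) := by
    rw [klD, ← Finset.sum_neg_distrib]
    refine Finset.sum_congr rfl fun a _ => ?_
    rw [show Q a / R a = (R a / Q a)⁻¹ by rw [inv_div], Real.log_inv]
    ring
  rw [key]
  have h := gibbs_le Q R hQ.1 (fun a => (hRpos a).le) (fun a _ => hRpos a)
  rw [hRsum, hQ.2] at h
  linarith

lemma sum_triple {𝒳 : Type*} [Fintype 𝒳] (g : 𝒳 × 𝒳 × 𝒳 → ℝ) :
    ∑ z : 𝒳 × 𝒳 × 𝒳, g z = ∑ x₁, ∑ x₂, ∑ x₃, g (x₁, x₂, x₃) := by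
  rw [Fintype.sum_prod_type]
  exact Finset.sum_congr rfl fun x₁ _ => Fintype.sum_prod_type _

lemma sum_pairR {𝒳 : Type*} [Fintype 𝒳] (g : 𝒳 × 𝒳 → ℝ) :
    ∑ p : 𝒳 × 𝒳, g p = ∑ x₁, ∑ x₂, g (x₁, x₂) := Fintype.sum_prod_type _

lemma sum_comm3a {𝒳 : Type*} [Fintype 𝒳] (f : 𝒳 → 𝒳 → 𝒳 → ℝ) :
    ∑ b, ∑ c, ∑ a, f a b c = ∑ a, ∑ b, ∑ c, f a b c := by
  rw [show (∑ b, ∑ c, ∑ a, f a b c) = ∑ b, ∑ a, ∑ c, f a b c from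
    Finset.sum_congr rfl fun b _ => Finset.sum_comm]
  exact Finset.sum_comm

lemma sum_comm3b {𝒳 : Type*} [Fintype 𝒳] (f : 𝒳 → 𝒳 → 𝒳 → ℝ) :
    ∑ a, ∑ c, ∑ b, f a b c = ∑ a, ∑ b, ∑ c, f a b c :=
  Finset.sum_congr rfl fun _ _ => Finset.sum_comm

lemma marg12_pmf {𝒳 : Type*} [Fintype 𝒳] (Q : 𝒳 × 𝒳 × 𝒳 → ℝ) (hQ : IsPMF Q) :
    IsPMF (marg12 Q) := by
  refine ⟨fun p => Finset.sum_nonneg fun x₃ _ => hQ.1 _, ?_⟩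
  rw [sum_pairR (marg12 Q)]
  simp only [marg12]
  rw [← sum_triple]
  exact hQ.2

lemma marg23_pmf {𝒳 : Type*} [Fintype 𝒳] (Q : 𝒳 × 𝒳 × 𝒳 → ℝ) (hQ : IsPMF Q) :
    IsPMF (marg23 Q) := by
  refine ⟨fun p => Finset.sum_nonneg fun x₁ _ => hQ.1 _, ?_⟩
  rw [sum_pairR (marg23 Q)]
  simp only [marg23]
  rw [sum_comm3a (fun a b c => Q (a, b, c)), ← sum_triple]
  exact hQ.2

lemma marg13_pmf {𝒳 : Type*} [Fintype 𝒳] (Q : 𝒳 × 𝒳 × 𝒳 → ℝ) (hQ : IsPMF Q) :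
    IsPMF (marg13 Q) := by
  refine ⟨fun p => Finset.sum_nonneg fun x₂ _ => hQ.1 _, ?_⟩
  rw [sum_pairR (marg13 Q)]
  simp only [marg13]
  rw [sum_comm3b (fun a b c => Q (a, b, c)), ← sum_triple]
  exact hQ.2

/-- The Bhattacharyya distance is nonnegative. -/
lemma bhat_nonneg {𝒳 𝒴 : Type*} [Fintype 𝒴] (W : 𝒳 → 𝒴 → ℝ) (hW : ∀ x, IsPMF (W x))
    (x₁ x₂ : 𝒳) : 0 ≤ bhat W x₁ x₂ := by
  rw [bhat, neg_nonneg]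
  apply Real.log_nonpos
  · exact Finset.sum_nonneg fun y _ => Real.sqrt_nonneg _
  · have h : ∑ y, Real.sqrt (W x₁ y * W x₂ y) = ∑ y, Real.sqrt (W x₁ y) * Real.sqrt (W x₂ y) :=
      Finset.sum_congr rfl fun y _ => Real.sqrt_mul ((hW x₁).1 y) _
    rw [h]
    calc ∑ y, Real.sqrt (W x₁ y) * Real.sqrt (W x₂ y)
        ≤ Real.sqrt (∑ y, W x₁ y) * Real.sqrt (∑ y, W x₂ y) :=
          sum_sqrt_mul_sqrt_le _ _ _ (fun y _ => (hW x₁).1 y) (fun y _ => (hW x₂).1 y)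
      _ = 1 := by rw [(hW x₁).2, (hW x₂).2, Real.sqrt_one, mul_one]

/-- The triple Cauchy–Schwarz bound (a "Loomis–Whitney" style estimate). -/
lemma triple_cs {𝒳 : Type*} [Fintype 𝒳] (Q : 𝒳 × 𝒳 × 𝒳 → ℝ) (hQ : IsPMF Q) :
    ∑ x₁, ∑ x₂, ∑ x₃,
      Real.sqrt (marg12 Q (x₁, x₂) * (marg23 Q (x₂, x₃) * marg13 Q (x₁, x₃))) ≤ 1 := by
  have hnn12 : ∀ p, 0 ≤ marg12 Q p := fun p => Finset.sum_nonneg fun _ _ => hQ.1 _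
  have hnn23 : ∀ p, 0 ≤ marg23 Q p := fun p => Finset.sum_nonneg fun _ _ => hQ.1 _
  have hnn13 : ∀ p, 0 ≤ marg13 Q p := fun p => Finset.sum_nonneg fun _ _ => hQ.1 _
  set M1 : 𝒳 → ℝ := fun x₁ => ∑ x₃, marg13 Q (x₁, x₃) with hM1
  set M2 : 𝒳 → ℝ := fun x₂ => ∑ x₃, marg23 Q (x₂, x₃) with hM2
  have hM1nn : ∀ x, 0 ≤ M1 x := fun x => Finset.sum_nonneg fun _ _ => hnn13 _
  have hM2nn : ∀ x, 0 ≤ M2 x := fun x => Finset.sum_nonneg fun _ _ => hnn23 _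
  have hM1sum : ∑ x₁, M1 x₁ = 1 := by
    simp only [hM1, marg13]
    rw [show (∑ x₁, ∑ x₃, ∑ x₂, Q (x₁, x₂, x₃)) = ∑ x₁, ∑ x₂, ∑ x₃, Q (x₁, x₂, x₃) from
      sum_comm3b (fun a b c => Q (a, b, c)), ← sum_triple]
    exact hQ.2
  have hM2sum : ∑ x₂, M2 x₂ = 1 := by
    simp only [hM2, marg23]
    rw [show (∑ x₂, ∑ x₃, ∑ x₁, Q (x₁, x₂, x₃)) = ∑ x₁, ∑ x₂, ∑ x₃, Q (x₁, x₂, x₃) from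
      sum_comm3a (fun a b c => Q (a, b, c)), ← sum_triple]
    exact hQ.2
  have step1 : ∀ x₁ x₂,
      ∑ x₃, Real.sqrt (marg12 Q (x₁, x₂) * (marg23 Q (x₂, x₃) * marg13 Q (x₁, x₃)))
        ≤ Real.sqrt (marg12 Q (x₁, x₂)) * Real.sqrt (M2 x₂ * M1 x₁) := by
    intro x₁ x₂
    have e : ∀ x₃, Real.sqrt (marg12 Q (x₁, x₂) * (marg23 Q (x₂, x₃) * marg13 Q (x₁, x₃)))
        = Real.sqrt (marg12 Q (x₁, x₂)) *
          (Real.sqrt (marg23 Q (x₂, x₃)) * Real.sqrt (marg13 Q (x₁, x₃))) := by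
      intro x₃
      rw [Real.sqrt_mul (hnn12 _), Real.sqrt_mul (hnn23 _)]
    simp only [e]
    rw [← Finset.mul_sum]
    have h := sum_sqrt_mul_sqrt_le Finset.univ (fun x₃ => marg23 Q (x₂, x₃))
      (fun x₃ => marg13 Q (x₁, x₃)) (fun _ _ => hnn23 _) (fun _ _ => hnn13 _)
    calc Real.sqrt (marg12 Q (x₁, x₂)) *
          ∑ x₃, Real.sqrt (marg23 Q (x₂, x₃)) * Real.sqrt (marg13 Q (x₁, x₃))
        ≤ Real.sqrt (marg12 Q (x₁, x₂)) * (Real.sqrt (M2 x₂) * Real.sqrt (M1 x₁)) := by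
          exact mul_le_mul_of_nonneg_left h (Real.sqrt_nonneg _)
      _ = Real.sqrt (marg12 Q (x₁, x₂)) * Real.sqrt (M2 x₂ * M1 x₁) := by
          rw [Real.sqrt_mul (hM2nn _)]
  calc ∑ x₁, ∑ x₂, ∑ x₃,
        Real.sqrt (marg12 Q (x₁, x₂) * (marg23 Q (x₂, x₃) * marg13 Q (x₁, x₃)))
      ≤ ∑ x₁, ∑ x₂, Real.sqrt (marg12 Q (x₁, x₂)) * Real.sqrt (M2 x₂ * M1 x₁) :=
        Finset.sum_le_sum fun x₁ _ => Finset.sum_le_sum fun x₂ _ => step1 x₁ x₂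
    _ = ∑ p : 𝒳 × 𝒳, Real.sqrt (marg12 Q p) * Real.sqrt (M2 p.2 * M1 p.1) :=
        (sum_pairR (fun p => Real.sqrt (marg12 Q p) * Real.sqrt (M2 p.2 * M1 p.1))).symm
    _ ≤ Real.sqrt (∑ p : 𝒳 × 𝒳, marg12 Q p) * Real.sqrt (∑ p : 𝒳 × 𝒳, M2 p.2 * M1 p.1) :=
        sum_sqrt_mul_sqrt_le _ _ _ (fun p _ => hnn12 p)
          (fun p _ => mul_nonneg (hM2nn _) (hM1nn _))
    _ = 1 := by
        have e1 : ∑ p : 𝒳 × 𝒳, marg12 Q p = 1 := (marg12_pmf Q hQ).2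
        have e2 : ∑ p : 𝒳 × 𝒳, M2 p.2 * M1 p.1 = 1 := by
          rw [sum_pairR (fun p => M2 p.2 * M1 p.1)]
          simp only [← Finset.mul_sum, ← Finset.sum_mul]
          rw [hM1sum, hM2sum]
          simp [hM2sum]
        rw [e1, e2, Real.sqrt_one, mul_one]

/-- Han's inequality for the KL divergence. -/
lemma han_kl {𝒳 : Type*} [Fintype 𝒳] (P : 𝒳 → ℝ) (hPpos : ∀ x, 0 < P x)
    (Q : 𝒳 × 𝒳 × 𝒳 → ℝ) (hQ : IsPMF Q) :
    klD (marg12 Q) (fun p => P p.1 * P p.2) + klD (marg23 Q) (fun p => P p.1 * P p.2)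
      + klD (marg13 Q) (fun p => P p.1 * P p.2)
      ≤ 2 * klD Q (fun z => P z.1 * P z.2.1 * P z.2.2) := by
  have hnn12 : ∀ p, 0 ≤ marg12 Q p := fun p => Finset.sum_nonneg fun _ _ => hQ.1 _
  have hnn23 : ∀ p, 0 ≤ marg23 Q p := fun p => Finset.sum_nonneg fun _ _ => hQ.1 _
  have hnn13 : ∀ p, 0 ≤ marg13 Q p := fun p => Finset.sum_nonneg fun _ _ => hQ.1 _
  have e12 : klD (marg12 Q) (fun p => P p.1 * P p.2)
      = ∑ x₁, ∑ x₂, ∑ x₃, Q (x₁, x₂, x₃) *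
          Real.log (marg12 Q (x₁, x₂) / (P x₁ * P x₂)) := by
    rw [klD, sum_pairR (fun p => marg12 Q p * Real.log (marg12 Q p / (P p.1 * P p.2)))]
    refine Finset.sum_congr rfl fun x₁ _ => Finset.sum_congr rfl fun x₂ _ => ?_
    simp only [marg12]
    rw [Finset.sum_mul]
  have e23 : klD (marg23 Q) (fun p => P p.1 * P p.2)
      = ∑ x₁, ∑ x₂, ∑ x₃, Q (x₁, x₂, x₃) *
          Real.log (marg23 Q (x₂, x₃) / (P x₂ * P x₃)) := by
    rw [klD, sum_pairR (fun p => marg23 Q p * Real.log (marg23 Q p / (P p.1 * P p.2)))]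
    rw [← sum_comm3a (fun x₁ x₂ x₃ => Q (x₁, x₂, x₃) *
          Real.log (marg23 Q (x₂, x₃) / (P x₂ * P x₃)))]
    refine Finset.sum_congr rfl fun x₂ _ => Finset.sum_congr rfl fun x₃ _ => ?_
    simp only [marg23]
    rw [Finset.sum_mul]
  have e13 : klD (marg13 Q) (fun p => P p.1 * P p.2)
      = ∑ x₁, ∑ x₂, ∑ x₃, Q (x₁, x₂, x₃) *
          Real.log (marg13 Q (x₁, x₃) / (P x₁ * P x₃)) := by
    rw [klD, sum_pairR (fun p => marg13 Q p * Real.log (marg13 Q p / (P p.1 * P p.2)))]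
    rw [← sum_comm3b (fun x₁ x₂ x₃ => Q (x₁, x₂, x₃) *
          Real.log (marg13 Q (x₁, x₃) / (P x₁ * P x₃)))]
    refine Finset.sum_congr rfl fun x₁ _ => Finset.sum_congr rfl fun x₃ _ => ?_
    simp only [marg13]
    rw [Finset.sum_mul]
  have eQ : klD Q (fun z => P z.1 * P z.2.1 * P z.2.2)
      = ∑ x₁, ∑ x₂, ∑ x₃, Q (x₁, x₂, x₃) *
          Real.log (Q (x₁, x₂, x₃) / (P x₁ * P x₂ * P x₃)) := by
    rw [klD, sum_triple (fun z => Q z * Real.log (Q z / (P z.1 * P z.2.1 * P z.2.2)))]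
  rw [e12, e23, e13, eQ]
  have key : ∀ x₁ x₂ x₃,
      Q (x₁, x₂, x₃) * Real.log (marg12 Q (x₁, x₂) / (P x₁ * P x₂))
      + Q (x₁, x₂, x₃) * Real.log (marg23 Q (x₂, x₃) / (P x₂ * P x₃))
      + Q (x₁, x₂, x₃) * Real.log (marg13 Q (x₁, x₃) / (P x₁ * P x₃))
      ≤ 2 * (Q (x₁, x₂, x₃) * Real.log (Q (x₁, x₂, x₃) / (P x₁ * P x₂ * P x₃)))
        + 2 * (Real.sqrt (marg12 Q (x₁, x₂) * (marg23 Q (x₂, x₃) * marg13 Q (x₁, x₃)))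
            - Q (x₁, x₂, x₃)) := by
    intro x₁ x₂ x₃
    obtain h | h := eq_or_lt_of_le (hQ.1 (x₁, x₂, x₃))
    · rw [← h]
      simp only [zero_mul, mul_zero, add_zero, zero_add, sub_zero]
      positivity
    · set q := Q (x₁, x₂, x₃) with hq
      have ha : 0 < marg12 Q (x₁, x₂) := lt_of_lt_of_le h
        (Finset.single_le_sum (f := fun x₃ => Q (x₁, x₂, x₃)) (fun _ _ => hQ.1 _)
          (Finset.mem_univ x₃))
      have hb : 0 < marg23 Q (x₂, x₃) := lt_of_lt_of_le h
        (Finset.single_le_sum (f := fun x₁ => Q (x₁, x₂, x₃)) (fun _ _ => hQ.1 _)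
          (Finset.mem_univ x₁))
      have hc : 0 < marg13 Q (x₁, x₃) := lt_of_lt_of_le h
        (Finset.single_le_sum (f := fun x₂ => Q (x₁, x₂, x₃)) (fun _ _ => hQ.1 _)
          (Finset.mem_univ x₂))
      have habc : 0 < marg12 Q (x₁, x₂) * (marg23 Q (x₂, x₃) * marg13 Q (x₁, x₃)) :=
        mul_pos ha (mul_pos hb hc)
      have l1 : Real.log (marg12 Q (x₁, x₂) / (P x₁ * P x₂))
          = Real.log (marg12 Q (x₁, x₂)) - Real.log (P x₁) - Real.log (P x₂) := by
        rw [Real.log_div ha.ne' (mul_pos (hPpos x₁) (hPpos x₂)).ne',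
          Real.log_mul (hPpos x₁).ne' (hPpos x₂).ne']; ring
      have l2 : Real.log (marg23 Q (x₂, x₃) / (P x₂ * P x₃))
          = Real.log (marg23 Q (x₂, x₃)) - Real.log (P x₂) - Real.log (P x₃) := by
        rw [Real.log_div hb.ne' (mul_pos (hPpos x₂) (hPpos x₃)).ne',
          Real.log_mul (hPpos x₂).ne' (hPpos x₃).ne']; ring
      have l3 : Real.log (marg13 Q (x₁, x₃) / (P x₁ * P x₃))
          = Real.log (marg13 Q (x₁, x₃)) - Real.log (P x₁) - Real.log (P x₃) := by
        rw [Real.log_div hc.ne' (mul_pos (hPpos x₁) (hPpos x₃)).ne',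
          Real.log_mul (hPpos x₁).ne' (hPpos x₃).ne']; ring
      have lQ : Real.log (q / (P x₁ * P x₂ * P x₃))
          = Real.log q - Real.log (P x₁) - Real.log (P x₂) - Real.log (P x₃) := by
        rw [Real.log_div h.ne' (mul_pos (mul_pos (hPpos x₁) (hPpos x₂)) (hPpos x₃)).ne',
          Real.log_mul (mul_pos (hPpos x₁) (hPpos x₂)).ne' (hPpos x₃).ne',
          Real.log_mul (hPpos x₁).ne' (hPpos x₂).ne']; ring
      have hlog : Real.log (Real.sqrt (marg12 Q (x₁, x₂) *
            (marg23 Q (x₂, x₃) * marg13 Q (x₁, x₃))))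
          = (Real.log (marg12 Q (x₁, x₂)) + Real.log (marg23 Q (x₂, x₃))
              + Real.log (marg13 Q (x₁, x₃))) / 2 := by
        rw [Real.log_sqrt habc.le, Real.log_mul ha.ne' (mul_pos hb hc).ne',
          Real.log_mul hb.ne' hc.ne']; ring
      have hs : Real.log (Real.sqrt (marg12 Q (x₁, x₂) *
            (marg23 Q (x₂, x₃) * marg13 Q (x₁, x₃))) / q)
          ≤ Real.sqrt (marg12 Q (x₁, x₂) * (marg23 Q (x₂, x₃) * marg13 Q (x₁, x₃))) / q - 1 :=
        Real.log_le_sub_one_of_pos (div_pos (Real.sqrt_pos.2 habc) h)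
      rw [Real.log_div (Real.sqrt_pos.2 habc).ne' h.ne', hlog] at hs
      have h2 : q * ((Real.log (marg12 Q (x₁, x₂)) + Real.log (marg23 Q (x₂, x₃))
            + Real.log (marg13 Q (x₁, x₃))) / 2 - Real.log q)
          ≤ Real.sqrt (marg12 Q (x₁, x₂) * (marg23 Q (x₂, x₃) * marg13 Q (x₁, x₃))) - q := by
        calc q * _ ≤ q * (Real.sqrt (marg12 Q (x₁, x₂) *
              (marg23 Q (x₂, x₃) * marg13 Q (x₁, x₃))) / q - 1) :=
            mul_le_mul_of_nonneg_left hs h.le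
          _ = _ := by field_simp
      rw [l1, l2, l3, lQ]
      nlinarith [h2]
  have hQtriple : ∑ x₁, ∑ x₂, ∑ x₃, Q (x₁, x₂, x₃) = 1 := by
    rw [← sum_triple]; exact hQ.2
  have hF := triple_cs Q hQ
  calc (∑ x₁, ∑ x₂, ∑ x₃, Q (x₁, x₂, x₃) *
          Real.log (marg12 Q (x₁, x₂) / (P x₁ * P x₂)))
      + (∑ x₁, ∑ x₂, ∑ x₃, Q (x₁, x₂, x₃) *
          Real.log (marg23 Q (x₂, x₃) / (P x₂ * P x₃)))
      + (∑ x₁, ∑ x₂, ∑ x₃, Q (x₁, x₂, x₃) *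
          Real.log (marg13 Q (x₁, x₃) / (P x₁ * P x₃)))
      = ∑ x₁, ∑ x₂, ∑ x₃, (Q (x₁, x₂, x₃) *
            Real.log (marg12 Q (x₁, x₂) / (P x₁ * P x₂))
          + Q (x₁, x₂, x₃) * Real.log (marg23 Q (x₂, x₃) / (P x₂ * P x₃))
          + Q (x₁, x₂, x₃) * Real.log (marg13 Q (x₁, x₃) / (P x₁ * P x₃))) := by
        simp only [Finset.sum_add_distrib]
    _ ≤ ∑ x₁, ∑ x₂, ∑ x₃,
          (2 * (Q (x₁, x₂, x₃) * Real.log (Q (x₁, x₂, x₃) / (P x₁ * P x₂ * P x₃)))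
          + 2 * (Real.sqrt (marg12 Q (x₁, x₂) * (marg23 Q (x₂, x₃) * marg13 Q (x₁, x₃)))
              - Q (x₁, x₂, x₃))) :=
        Finset.sum_le_sum fun x₁ _ => Finset.sum_le_sum fun x₂ _ =>
          Finset.sum_le_sum fun x₃ _ => key x₁ x₂ x₃
    _ = 2 * (∑ x₁, ∑ x₂, ∑ x₃, Q (x₁, x₂, x₃) *
            Real.log (Q (x₁, x₂, x₃) / (P x₁ * P x₂ * P x₃)))
        + 2 * ((∑ x₁, ∑ x₂, ∑ x₃,
            Real.sqrt (marg12 Q (x₁, x₂) * (marg23 Q (x₂, x₃) * marg13 Q (x₁, x₃))))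
          - ∑ x₁, ∑ x₂, ∑ x₃, Q (x₁, x₂, x₃)) := by
        simp only [Finset.sum_add_distrib, Finset.sum_sub_distrib, ← Finset.mul_sum]
    _ ≤ 2 * (∑ x₁, ∑ x₂, ∑ x₃, Q (x₁, x₂, x₃) *
            Real.log (Q (x₁, x₂, x₃) / (P x₁ * P x₂ * P x₃))) := by
        rw [hQtriple]
        nlinarith [hF]

/-- `ψ₃(P_XY) ≥ ψ₂(P_XY)` (via Han's inequality for the KL divergence). -/
theorem psi3_ge_psi2 {𝒳 𝒴 : Type*} [Fintype 𝒳] [Fintype 𝒴]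
    (P : 𝒳 → ℝ) (W : 𝒳 → 𝒴 → ℝ)
    (hP : IsPMF P) (hPpos : ∀ x, 0 < P x) (hW : ∀ x, IsPMF (W x)) :
    psi2 P W ≤ psi3 P W := by
  have hR2sum : ∑ p : 𝒳 × 𝒳, P p.1 * P p.2 = 1 := by
    rw [sum_pairR (fun p => P p.1 * P p.2)]
    simp only [← Finset.mul_sum, ← Finset.sum_mul, hP.2, mul_one, one_mul]
  have hbdd : BddBelow {v : ℝ | ∃ Q : 𝒳 × 𝒳 → ℝ, IsPMF Q ∧
      v = (1/2) * klD Q (fun p => P p.1 * P p.2) + dQ W Q} := by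
    refine ⟨0, fun v hv => ?_⟩
    obtain ⟨Q', hQ', rfl⟩ := hv
    have h1 : 0 ≤ klD Q' (fun p => P p.1 * P p.2) :=
      klD_nonneg _ _ hQ' (fun p => mul_pos (hPpos p.1) (hPpos p.2)) hR2sum
    have h2 : 0 ≤ dQ W Q' := by
      rw [dQ]
      exact Finset.sum_nonneg fun p _ => mul_nonneg (hQ'.1 p) (bhat_nonneg W hW p.1 p.2)
    linarith
  rw [psi2, psi3]
  apply le_csInf
  · refine ⟨_, ⟨fun z => P z.1 * P z.2.1 * P z.2.2, ⟨fun z =>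
      mul_nonneg (mul_nonneg (hPpos z.1).le (hPpos z.2.1).le) (hPpos z.2.2).le, ?_⟩, rfl⟩⟩
    rw [sum_triple (fun z => P z.1 * P z.2.1 * P z.2.2)]
    simp only [← Finset.mul_sum, ← Finset.sum_mul, hP.2, mul_one, one_mul]
  · rintro v ⟨Q, hQ, rfl⟩
    have h12 : sInf {v : ℝ | ∃ Q' : 𝒳 × 𝒳 → ℝ, IsPMF Q' ∧
        v = (1/2) * klD Q' (fun p => P p.1 * P p.2) + dQ W Q'}
        ≤ (1/2) * klD (marg12 Q) (fun p => P p.1 * P p.2) + dQ W (marg12 Q) :=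
      csInf_le hbdd ⟨marg12 Q, marg12_pmf Q hQ, rfl⟩
    have h23 : sInf {v : ℝ | ∃ Q' : 𝒳 × 𝒳 → ℝ, IsPMF Q' ∧
        v = (1/2) * klD Q' (fun p => P p.1 * P p.2) + dQ W Q'}
        ≤ (1/2) * klD (marg23 Q) (fun p => P p.1 * P p.2) + dQ W (marg23 Q) :=
      csInf_le hbdd ⟨marg23 Q, marg23_pmf Q hQ, rfl⟩
    have h13 : sInf {v : ℝ | ∃ Q' : 𝒳 × 𝒳 → ℝ, IsPMF Q' ∧
        v = (1/2) * klD Q' (fun p => P p.1 * P p.2) + dQ W Q'}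
        ≤ (1/2) * klD (marg13 Q) (fun p => P p.1 * P p.2) + dQ W (marg13 Q) :=
      csInf_le hbdd ⟨marg13 Q, marg13_pmf Q hQ, rfl⟩
    have hH := han_kl P hPpos Q hQ
    linarith

end
end

section
/- For every integer K ≥ 2 it holds that ψ_K(P_XY) ≥ ψ₂(P_XY), where ψ_K(P_XY) := min over joint PMFs Q on 𝒳^K of (1/K)·D_KL(Q ‖ P_X^{⊗K}) + (1/K)·Σ_{i=1}^{K} d(Q_{X_i X_{σ_K(i)}}), σ_K being the cyclic permutation of [K] with σ_K(1)=K and σ_K(i)=i−1 for i≥2. That is, among all cycle lengths, transpositions (K=2) minimize the rate function ψ_K. -/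
open Real BigOperators Finset
open scoped Classical

noncomputable section

/-- The `(i,j)`-pair marginal of a joint PMF `Q` on `𝒳^K`. -/
def pairMarg {𝒳 : Type*} [Fintype 𝒳] {K : ℕ} (Q : (Fin K → 𝒳) → ℝ) (i j : Fin K) :
    𝒳 × 𝒳 → ℝ :=
  fun p => ∑ z : Fin K → 𝒳, if z i = p.1 ∧ z j = p.2 then Q z else 0

/-- The cyclic permutation `σ_K` of `[K]`, with `σ_K(1) = K` and `σ_K(i) = i - 1` for
`i ≥ 2` (in zero-based indexing: `i ↦ i - 1 (mod K)`). -/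
def sigmaK (K : ℕ) : Equiv.Perm (Fin K) := (finRotate K).symm

/-- The rate function `ψ_K(P_XY)` for length-`K` cycles. -/
def psiK {𝒳 𝒴 : Type*} [Fintype 𝒳] [Fintype 𝒴] (K : ℕ)
    (P : 𝒳 → ℝ) (W : 𝒳 → 𝒴 → ℝ) : ℝ :=
  sInf { v : ℝ | ∃ Q : (Fin K → 𝒳) → ℝ, IsPMF Q ∧
    v = (1 / (K : ℝ)) * klD Q (fun z => ∏ j, P (z j))
      + (1 / (K : ℝ)) * ∑ i, dQ W (pairMarg Q i (sigmaK K i)) }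


/-- Gibbs' inequality. -/
lemma gibbs {α : Type*} [Fintype α] (Q R : α → ℝ)
    (hQ0 : ∀ a, 0 ≤ Q a) (hQ1 : ∑ a, Q a = 1)
    (hR0 : ∀ a, 0 ≤ R a) (hR1 : ∑ a, R a ≤ 1)
    (hpos : ∀ a, 0 < Q a → 0 < R a) :
    0 ≤ ∑ a, Q a * Real.log (Q a / R a) := by
  have key : ∀ a, Q a * Real.log (R a / Q a) ≤ R a - Q a := by
    intro a
    rcases eq_or_lt_of_le (hQ0 a) with h | h
    · simp [← h, hR0 a]
    · have hR := hpos a h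
      have hlog := Real.log_le_sub_one_of_pos (div_pos hR h)
      have := mul_le_mul_of_nonneg_left hlog (le_of_lt h)
      calc Q a * Real.log (R a / Q a) ≤ Q a * (R a / Q a - 1) := this
        _ = R a - Q a := by field_simp
  have hsum : ∑ a, Q a * Real.log (R a / Q a) ≤ 0 := by
    calc ∑ a, Q a * Real.log (R a / Q a) ≤ ∑ a, (R a - Q a) :=
          Finset.sum_le_sum (fun a _ => key a)
      _ = (∑ a, R a) - 1 := by rw [Finset.sum_sub_distrib, hQ1]
      _ ≤ 0 := by linarith
  have heq : ∀ a, Q a * Real.log (Q a / R a) = - (Q a * Real.log (R a / Q a)) := by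
    intro a
    rcases eq_or_lt_of_le (hQ0 a) with h | h
    · simp [← h]
    · have hR := hpos a h
      rw [Real.log_div (ne_of_gt h) (ne_of_gt hR), Real.log_div (ne_of_gt hR) (ne_of_gt h)]
      ring
  calc (0:ℝ) ≤ - ∑ a, Q a * Real.log (R a / Q a) := by linarith
    _ = ∑ a, Q a * Real.log (Q a / R a) := by
        rw [← Finset.sum_neg_distrib]
        exact Finset.sum_congr rfl (fun a _ => (heq a).symm)

/-- single-coordinate marginal -/
def m1 {𝒳 : Type*} [Fintype 𝒳] {K : ℕ} (Q : (Fin K → 𝒳) → ℝ) (i : Fin K) : 𝒳 → ℝ :=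
  fun x => ∑ z : Fin K → 𝒳, if z i = x then Q z else 0

section Marg
variable {𝒳 : Type*} [Fintype 𝒳] {K : ℕ} (Q : (Fin K → 𝒳) → ℝ)

lemma pairMarg_sum_mul (i j : Fin K) (g : 𝒳 × 𝒳 → ℝ) :
    ∑ p : 𝒳 × 𝒳, pairMarg Q i j p * g p = ∑ z, Q z * g (z i, z j) := by
  unfold pairMarg
  simp_rw [Finset.sum_mul]
  rw [Finset.sum_comm]
  refine Finset.sum_congr rfl (fun z _ => ?_)
  have : ∀ p : 𝒳 × 𝒳, ((if z i = p.1 ∧ z j = p.2 then Q z else 0) * g p)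
      = (if (z i, z j) = p then Q z * g p else 0) := by
    intro p
    by_cases h : (z i, z j) = p
    · subst h; simp
    · have : ¬ (z i = p.1 ∧ z j = p.2) := by
        intro ⟨h1, h2⟩; exact h (Prod.ext h1 h2)
      simp [this, h]
  simp_rw [this]
  simp

lemma m1_sum_mul (i : Fin K) (g : 𝒳 → ℝ) :
    ∑ x, m1 Q i x * g x = ∑ z, Q z * g (z i) := by
  unfold m1
  simp_rw [Finset.sum_mul]
  rw [Finset.sum_comm]
  refine Finset.sum_congr rfl (fun z _ => ?_)
  have : ∀ x, ((if z i = x then Q z else 0) * g x) = (if z i = x then Q z * g (z i) else 0) := by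
    intro x
    by_cases h : z i = x <;> simp [h]
  simp_rw [this]
  simp

lemma pairMarg_nonneg (hQ0 : ∀ z, 0 ≤ Q z) (i j : Fin K) (p : 𝒳 × 𝒳) : 0 ≤ pairMarg Q i j p :=
  Finset.sum_nonneg fun z _ => by by_cases h : z i = p.1 ∧ z j = p.2 <;> simp [h, hQ0 z]

lemma m1_nonneg (hQ0 : ∀ z, 0 ≤ Q z) (i : Fin K) (x : 𝒳) : 0 ≤ m1 Q i x :=
  Finset.sum_nonneg fun z _ => by by_cases h : z i = x <;> simp [h, hQ0 z]

lemma le_pairMarg (hQ0 : ∀ z, 0 ≤ Q z) (i j : Fin K) (z : Fin K → 𝒳) : Q z ≤ pairMarg Q i j (z i, z j) := by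
  have := Finset.single_le_sum
    (f := fun z' : Fin K → 𝒳 => if z' i = z i ∧ z' j = z j then Q z' else 0)
    (fun z' _ => by by_cases h : z' i = z i ∧ z' j = z j <;> simp [h, hQ0 z'])
    (Finset.mem_univ z)
  simpa [pairMarg] using this

lemma le_m1 (hQ0 : ∀ z, 0 ≤ Q z) (i : Fin K) (z : Fin K → 𝒳) : Q z ≤ m1 Q i (z i) := by
  have := Finset.single_le_sum
    (f := fun z' : Fin K → 𝒳 => if z' i = z i then Q z' else 0)
    (fun z' _ => by by_cases h : z' i = z i <;> simp [h, hQ0 z'])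
    (Finset.mem_univ z)
  simpa [m1] using this

lemma sum_pairMarg_snd (i j : Fin K) (a : 𝒳) :
    ∑ b, pairMarg Q i j (a, b) = m1 Q i a := by
  unfold pairMarg m1
  rw [Finset.sum_comm]
  refine Finset.sum_congr rfl (fun z _ => ?_)
  by_cases h : z i = a
  · simp [h]
  · simp [h]

lemma pairMarg_swap (i j : Fin K) (a b : 𝒳) :
    pairMarg Q i j (a, b) = pairMarg Q j i (b, a) := by
  unfold pairMarg
  refine Finset.sum_congr rfl (fun z _ => if_congr ?_ rfl rfl)
  exact ⟨fun h => ⟨h.2, h.1⟩, fun h => ⟨h.2, h.1⟩⟩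

lemma m1_sum (hQ1 : ∑ z, Q z = 1) (i : Fin K) : ∑ x, m1 Q i x = 1 := by
  have := m1_sum_mul Q i (fun _ => 1)
  simpa [hQ1] using this

lemma pairMarg_sum (hQ1 : ∑ z, Q z = 1) (i j : Fin K) :
    ∑ p : 𝒳 × 𝒳, pairMarg Q i j p = 1 := by
  have := pairMarg_sum_mul Q i j (fun _ => 1)
  simpa [hQ1] using this

end Marg

section Chain
variable {𝒳 : Type*} [Fintype 𝒳]

/-- Sum of a "chain"-structured product is at most 1. -/
lemma chain_sum_le : ∀ (K : ℕ) (f : Fin K → (Fin K → 𝒳) → ℝ),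
    (∀ i (z z' : Fin K → 𝒳), (∀ j, j ≤ i → z j = z' j) → f i z = f i z') →
    (∀ i z, 0 ≤ f i z) →
    (∀ i z, ∑ x, f i (Function.update z i x) ≤ 1) →
    ∑ z, ∏ i, f i z ≤ 1 := by
  intro K
  induction K with
  | zero =>
    intro f _ _ _
    rw [Finset.sum_congr rfl (fun z _ => Finset.prod_of_isEmpty _)]
    simp
  | succ n ih =>
    intro f hdep hnn hsum
    cases isEmpty_or_nonempty 𝒳 with
    | inl hE =>
      haveI : IsEmpty (Fin (n+1) → 𝒳) := by
        constructor; intro z; exact (hE.false (z 0))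
      simp
    | inr hNE =>
      obtain ⟨x₀⟩ := hNE
      set e : (Fin n → 𝒳) × 𝒳 ≃ (Fin (n+1) → 𝒳) :=
        { toFun := fun p => Fin.snoc p.1 p.2
          invFun := fun z => (Fin.init z, z (Fin.last n))
          left_inv := fun p => by simp
          right_inv := fun z => by simp [Fin.snoc_init_self] } with he
      rw [← Equiv.sum_comp e (fun z => ∏ i, f i z), Fintype.sum_prod_type]
      have hagree : ∀ (i : Fin n) (w w' : Fin n → 𝒳) (x x' : 𝒳),
          (∀ j, j ≤ i → w j = w' j) →
          f i.castSucc (Fin.snoc w x) = f i.castSucc (Fin.snoc w' x') := by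
        intro i w w' x x' hww
        refine hdep _ _ _ (fun j hj => ?_)
        have hjlast : j ≠ Fin.last n := by
          intro h
          rw [h] at hj
          exact absurd (lt_of_le_of_lt hj (Fin.castSucc_lt_last i)) (lt_irrefl _)
        obtain ⟨j', rfl⟩ := Fin.exists_castSucc_eq.2 hjlast
        rw [Fin.snoc_castSucc, Fin.snoc_castSucc]
        exact hww j' (by exact_mod_cast hj)
      have key : ∀ w : Fin n → 𝒳,
          ∑ x, ∏ i : Fin (n+1), f i (Fin.snoc w x)
          ≤ ∏ i : Fin n, f i.castSucc (Fin.snoc w x₀) := by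
        intro w
        have hprod : ∀ x, ∏ i : Fin (n+1), f i (Fin.snoc w x)
            = (∏ i : Fin n, f i.castSucc (Fin.snoc w x₀)) * f (Fin.last n) (Fin.snoc w x) := by
          intro x
          rw [Fin.prod_univ_castSucc]
          congr 1
          exact Finset.prod_congr rfl (fun i _ => hagree i w w x x₀ (fun _ _ => rfl))
        simp_rw [hprod, ← Finset.mul_sum]
        have hsum1 : ∑ x, f (Fin.last n) (Fin.snoc w x) ≤ 1 := by
          have h2 : ∑ x, f (Fin.last n) (Fin.snoc w x)
              = ∑ x, f (Fin.last n)
                  (Function.update (Fin.snoc w x₀ : Fin (n+1) → 𝒳) (Fin.last n) x) :=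
            Finset.sum_congr rfl (fun x _ => by rw [Fin.update_snoc_last])
          rw [h2]
          exact hsum _ _
        have hpnn : 0 ≤ ∏ i : Fin n, f i.castSucc (Fin.snoc w x₀) :=
          Finset.prod_nonneg (fun i _ => hnn _ _)
        calc (∏ i : Fin n, f i.castSucc (Fin.snoc w x₀)) * ∑ x, f (Fin.last n) (Fin.snoc w x)
            ≤ (∏ i : Fin n, f i.castSucc (Fin.snoc w x₀)) * 1 :=
              mul_le_mul_of_nonneg_left hsum1 hpnn
          _ = _ := mul_one _
      calc ∑ w : Fin n → 𝒳, ∑ x, ∏ i : Fin (n+1), f i (e (w, x))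
          ≤ ∑ w : Fin n → 𝒳, ∏ i : Fin n, f i.castSucc (Fin.snoc w x₀) :=
            Finset.sum_le_sum (fun w _ => key w)
        _ ≤ 1 := by
            refine ih (fun i w => f i.castSucc (Fin.snoc w x₀)) ?_ (fun i w => hnn _ _) ?_
            · intro i w w' hww'
              exact hagree i w w' x₀ x₀ hww'
            · intro i w
              have : ∀ x, (Fin.snoc (Function.update w i x) x₀ : Fin (n+1) → 𝒳)
                  = Function.update (Fin.snoc w x₀ : Fin (n+1) → 𝒳) i.castSucc x := by
                intro x; rw [Fin.snoc_update]
              simp_rw [this]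
              exact hsum _ _

/-- Chain lemma for an arbitrary ordering of the coordinates, given by a permutation `τ`
(`τ i` is the position of coordinate `i` in the ordering). -/
lemma chain_sum_le_perm (K : ℕ) (τ : Equiv.Perm (Fin K)) (f : Fin K → (Fin K → 𝒳) → ℝ)
    (hdep : ∀ i (z z' : Fin K → 𝒳), (∀ j, τ j ≤ τ i → z j = z' j) → f i z = f i z')
    (hnn : ∀ i z, 0 ≤ f i z)
    (hsum : ∀ i z, ∑ x, f i (Function.update z i x) ≤ 1) :
    ∑ z, ∏ i, f i z ≤ 1 := by
  have hre : ∑ z, ∏ i, f i z = ∑ w : Fin K → 𝒳, ∏ p, f (τ.symm p) (fun i => w (τ i)) := by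
    rw [← Equiv.sum_comp (Equiv.arrowCongr τ.symm (Equiv.refl 𝒳)) (fun z => ∏ i, f i z)]
    refine Finset.sum_congr rfl (fun w _ => ?_)
    rw [← Equiv.prod_comp τ.symm (fun i => f i ((Equiv.arrowCongr τ.symm (Equiv.refl 𝒳)) w))]
    refine Finset.prod_congr rfl (fun p _ => ?_)
    congr 1
  rw [hre]
  refine chain_sum_le K (fun p w => f (τ.symm p) (fun i => w (τ i))) ?_ (fun p w => hnn _ _) ?_
  · intro p w w' hww'
    refine hdep _ _ _ (fun j hj => ?_)
    rw [Equiv.apply_symm_apply] at hj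
    exact hww' (τ j) hj
  · intro p w
    have : ∀ x, (fun i => Function.update w p x (τ i))
        = Function.update (fun i => w (τ i)) (τ.symm p) x := by
      intro x
      funext i
      by_cases h : i = τ.symm p
      · subst h; simp [Function.update]
      · have hτ : τ i ≠ p := fun hc => h (by rw [← hc]; simp)
        simp [Function.update, h, hτ]
    simp_rw [this]
    exact hsum _ _

end Chain

section MainIneq
variable {𝒳 : Type*} [Fintype 𝒳] {n : ℕ}

/-- Edge marginal along the cycle, oriented as `(j, j+1)`. -/
def Ed (Q : (Fin (n+2) → 𝒳) → ℝ) (j : Fin (n+2)) (a b : 𝒳) : ℝ :=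
  pairMarg Q j (finRotate (n+2) j) (a, b)

/-- First chain factorization (natural order). -/
def fA (Q : (Fin (n+2) → 𝒳) → ℝ) (p : Fin (n+2)) (z : Fin (n+2) → 𝒳) : ℝ :=
  if p = 0 then m1 Q 0 (z 0)
  else Ed Q (sigmaK (n+2) p) (z (sigmaK (n+2) p)) (z p) / m1 Q (sigmaK (n+2) p) (z (sigmaK (n+2) p))

/-- Second chain factorization (order `K-1, 0, 1, …, K-2`). -/
def fB (Q : (Fin (n+2) → 𝒳) → ℝ) (p : Fin (n+2)) (z : Fin (n+2) → 𝒳) : ℝ :=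
  if p = Fin.last (n+1) then m1 Q (Fin.last (n+1)) (z (Fin.last (n+1)))
  else if p = 0 then
    Ed Q (Fin.last (n+1)) (z (Fin.last (n+1))) (z 0) / m1 Q (Fin.last (n+1)) (z (Fin.last (n+1)))
  else m1 Q p (z p)

lemma zero_ne_last : (0 : Fin (n+2)) ≠ Fin.last (n+1) := by
  intro h
  have := congrArg Fin.val h
  simp [Fin.val_last] at this

lemma fA_zero (Q : (Fin (n+2) → 𝒳) → ℝ) (z : Fin (n+2) → 𝒳) :
    fA Q 0 z = m1 Q 0 (z 0) := if_pos rfl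

lemma fA_ne (Q : (Fin (n+2) → 𝒳) → ℝ) {p : Fin (n+2)} (hp : p ≠ 0) (z : Fin (n+2) → 𝒳) :
    fA Q p z = Ed Q (sigmaK (n+2) p) (z (sigmaK (n+2) p)) (z p)
      / m1 Q (sigmaK (n+2) p) (z (sigmaK (n+2) p)) := if_neg hp

lemma fB_lst (Q : (Fin (n+2) → 𝒳) → ℝ) (z : Fin (n+2) → 𝒳) :
    fB Q (Fin.last (n+1)) z = m1 Q (Fin.last (n+1)) (z (Fin.last (n+1))) := if_pos rfl

lemma fB_zero (Q : (Fin (n+2) → 𝒳) → ℝ) (z : Fin (n+2) → 𝒳) :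
    fB Q 0 z = Ed Q (Fin.last (n+1)) (z (Fin.last (n+1))) (z 0)
      / m1 Q (Fin.last (n+1)) (z (Fin.last (n+1))) := by
  unfold fB
  rw [if_neg zero_ne_last, if_pos rfl]

lemma fB_other (Q : (Fin (n+2) → 𝒳) → ℝ) {p : Fin (n+2)} (hp : p ≠ Fin.last (n+1))
    (hp0 : p ≠ 0) (z : Fin (n+2) → 𝒳) : fB Q p z = m1 Q p (z p) := by
  unfold fB
  rw [if_neg hp, if_neg hp0]

lemma main_ineq (P : 𝒳 → ℝ) (hPpos : ∀ x, 0 < P x)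
    (Q : (Fin (n+2) → 𝒳) → ℝ) (hQ0 : ∀ z, 0 ≤ Q z) (hQ1 : ∑ z, Q z = 1) :
    ∑ i, klD (pairMarg Q i (sigmaK (n+2) i)) (fun p : 𝒳 × 𝒳 => P p.1 * P p.2)
      ≤ 2 * klD Q (fun z => ∏ j, P (z j)) := by
  have hnx : ∀ j : Fin (n+2), finRotate (n+2) (sigmaK (n+2) j) = j := fun j =>
    Equiv.apply_symm_apply _ j
  have hxn : ∀ j : Fin (n+2), sigmaK (n+2) (finRotate (n+2) j) = j := fun j =>
    Equiv.symm_apply_apply _ j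
  have hnlst : finRotate (n+2) (Fin.last (n+1)) = 0 := finRotate_last
  have hσ0 : sigmaK (n+2) 0 = Fin.last (n+1) := by rw [← hnlst, hxn]
  have hvalσ : ∀ p : Fin (n+2), p ≠ 0 → ((sigmaK (n+2) p : ℕ) + 1 = (p : ℕ)) := by
    intro p hp
    have h1 : sigmaK (n+2) p ≠ Fin.last (n+1) := fun h => hp (by rw [← hnx p, h, hnlst])
    have h2 := coe_finRotate_of_ne_last (i := sigmaK (n+2) p) h1
    rw [hnx p] at h2
    omega
  have hσlt : ∀ p : Fin (n+2), p ≠ 0 → sigmaK (n+2) p < p := by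
    intro p hp
    have := hvalσ p hp
    exact Fin.lt_def.2 (by omega)
  have hσne : ∀ p : Fin (n+2), p ≠ 0 → sigmaK (n+2) p ≠ p := fun p hp => ne_of_lt (hσlt p hp)
  have hσlst_iff : ∀ p : Fin (n+2), sigmaK (n+2) p = Fin.last (n+1) ↔ p = 0 := by
    intro p
    constructor
    · intro h
      rw [← hnx p, h, hnlst]
    · intro h; rw [h, hσ0]
  -- basic facts about the marginals
  have hE_sum : ∀ (j : Fin (n+2)) a, ∑ b, Ed Q j a b = m1 Q j a := fun j a =>
    sum_pairMarg_snd Q j (finRotate (n+2) j) a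
  have hEnn : ∀ (j : Fin (n+2)) a b, 0 ≤ Ed Q j a b := fun j a b =>
    pairMarg_nonneg Q hQ0 _ _ _
  have hmnn : ∀ (j : Fin (n+2)) x, 0 ≤ m1 Q j x := m1_nonneg Q hQ0
  have hmpos : ∀ (j : Fin (n+2)) z, 0 < Q z → 0 < m1 Q j (z j) := fun j z hz =>
    lt_of_lt_of_le hz (le_m1 Q hQ0 j z)
  have hEposd : ∀ (j : Fin (n+2)) z, 0 < Q z → 0 < Ed Q j (z j) (z (finRotate (n+2) j)) :=
    fun j z hz => lt_of_lt_of_le hz (le_pairMarg Q hQ0 j (finRotate (n+2) j) z)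
  have hfAnn : ∀ p z, 0 ≤ fA Q p z := by
    intro p z
    by_cases hp : p = 0
    · rw [hp, fA_zero]; exact hmnn _ _
    · rw [fA_ne Q hp]; exact div_nonneg (hEnn _ _ _) (hmnn _ _)
  have hfBnn : ∀ p z, 0 ≤ fB Q p z := by
    intro p z
    by_cases hp : p = Fin.last (n+1)
    · rw [hp, fB_lst]; exact hmnn _ _
    · by_cases hp0 : p = 0
      · rw [hp0, fB_zero]; exact div_nonneg (hEnn _ _ _) (hmnn _ _)
      · rw [fB_other Q hp hp0]; exact hmnn _ _
  -- the chain factorizations sum to at most one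
  have hdivself : ∀ (j : Fin (n+2)) (a : 𝒳), m1 Q j a / m1 Q j a ≤ 1 := by
    intro j a
    rcases eq_or_lt_of_le (hmnn j a) with h | h
    · rw [← h]; simp
    · rw [div_self (ne_of_gt h)]
  have hRAsum : ∑ z, ∏ p, fA Q p z ≤ 1 := by
    refine chain_sum_le (n+2) (fA Q) ?_ hfAnn ?_
    · intro i z z' hzz'
      by_cases hi : i = 0
      · subst hi
        rw [fA_zero, fA_zero, hzz' 0 le_rfl]
      · rw [fA_ne Q hi, fA_ne Q hi, hzz' (sigmaK (n+2) i) (le_of_lt (hσlt i hi)),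
          hzz' i le_rfl]
    · intro i z
      by_cases hi : i = 0
      · subst hi
        have h2 : ∀ x : 𝒳, fA Q 0 (Function.update z 0 x) = m1 Q 0 x := by
          intro x
          rw [fA_zero, Function.update_self]
        simp_rw [h2]
        rw [m1_sum Q hQ1]
      · have h2 : ∀ x : 𝒳, fA Q i (Function.update z i x)
            = Ed Q (sigmaK (n+2) i) (z (sigmaK (n+2) i)) x / m1 Q (sigmaK (n+2) i) (z (sigmaK (n+2) i)) := by
          intro x
          rw [fA_ne Q hi, Function.update_self, Function.update_of_ne (hσne i hi)]
        simp_rw [h2]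
        rw [← Finset.sum_div, hE_sum]
        exact hdivself _ _
  have hRBsum : ∑ z, ∏ p, fB Q p z ≤ 1 := by
    refine chain_sum_le_perm (n+2) (finRotate (n+2)) (fB Q) ?_ hfBnn ?_
    · intro i z z' hzz'
      by_cases hi : i = Fin.last (n+1)
      · subst hi
        rw [fB_lst, fB_lst, hzz' (Fin.last (n+1)) le_rfl]
      · by_cases hi0 : i = 0
        · subst hi0
          have ha : z (Fin.last (n+1)) = z' (Fin.last (n+1)) := by
            refine hzz' (Fin.last (n+1)) ?_
            rw [hnlst]
            exact Fin.zero_le _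
          rw [fB_zero, fB_zero, ha, hzz' 0 le_rfl]
        · rw [fB_other Q hi hi0, fB_other Q hi hi0, hzz' i le_rfl]
    · intro i z
      by_cases hi : i = Fin.last (n+1)
      · subst hi
        have h2 : ∀ x : 𝒳, fB Q (Fin.last (n+1)) (Function.update z (Fin.last (n+1)) x)
            = m1 Q (Fin.last (n+1)) x := by
          intro x
          rw [fB_lst, Function.update_self]
        simp_rw [h2]
        rw [m1_sum Q hQ1]
      · by_cases hi0 : i = 0
        · subst hi0
          have h2 : ∀ x : 𝒳, fB Q 0 (Function.update z 0 x)
              = Ed Q (Fin.last (n+1)) (z (Fin.last (n+1))) x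
                / m1 Q (Fin.last (n+1)) (z (Fin.last (n+1))) := by
            intro x
            rw [fB_zero, Function.update_self,
              Function.update_of_ne (fun h => zero_ne_last h.symm)]
          simp_rw [h2]
          rw [← Finset.sum_div, hE_sum]
          exact hdivself _ _
        · have h2 : ∀ x : 𝒳, fB Q i (Function.update z i x) = m1 Q i x := by
            intro x
            rw [fB_other Q hi hi0, Function.update_self]
          simp_rw [h2]
          rw [m1_sum Q hQ1]
  -- positivity of the factorizations on the support of Q
  have hfApos : ∀ z, 0 < Q z → ∀ p, 0 < fA Q p z := by
    intro z hz p
    by_cases hp : p = 0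
    · rw [hp, fA_zero]; exact hmpos _ _ hz
    · rw [fA_ne Q hp]
      refine div_pos ?_ (hmpos _ _ hz)
      have h := hEposd (sigmaK (n+2) p) z hz
      rwa [hnx p] at h
  have hfBpos : ∀ z, 0 < Q z → ∀ p, 0 < fB Q p z := by
    intro z hz p
    by_cases hp : p = Fin.last (n+1)
    · rw [hp, fB_lst]; exact hmpos _ _ hz
    · by_cases hp0 : p = 0
      · rw [hp0, fB_zero]
        refine div_pos ?_ (hmpos _ _ hz)
        have h := hEposd (Fin.last (n+1)) z hz
        rwa [hnlst] at h
      · rw [fB_other Q hp hp0]; exact hmpos _ _ hz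
  have hGA : 0 ≤ ∑ z, Q z * Real.log (Q z / ∏ p, fA Q p z) :=
    gibbs Q _ hQ0 hQ1 (fun z => Finset.prod_nonneg (fun p _ => hfAnn p z)) hRAsum
      (fun z hz => Finset.prod_pos (fun p _ => hfApos z hz p))
  have hGB : 0 ≤ ∑ z, Q z * Real.log (Q z / ∏ p, fB Q p z) :=
    gibbs Q _ hQ0 hQ1 (fun z => Finset.prod_nonneg (fun p _ => hfBnn p z)) hRBsum
      (fun z hz => Finset.prod_pos (fun p _ => hfBpos z hz p))
  -- rewriting the two sides as sums over z
  have hLHS : ∀ i : Fin (n+2),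
      klD (pairMarg Q i (sigmaK (n+2) i)) (fun p : 𝒳 × 𝒳 => P p.1 * P p.2)
      = ∑ z, Q z * Real.log (pairMarg Q i (sigmaK (n+2) i) (z i, z (sigmaK (n+2) i))
          / (P (z i) * P (z (sigmaK (n+2) i)))) := by
    intro i
    unfold klD
    exact pairMarg_sum_mul Q i _
      (fun p => Real.log (pairMarg Q i (sigmaK (n+2) i) p / (P p.1 * P p.2)))
  have h1 : ∑ i, klD (pairMarg Q i (sigmaK (n+2) i)) (fun p : 𝒳 × 𝒳 => P p.1 * P p.2)
      = ∑ z, Q z * ∑ i, Real.log (pairMarg Q i (sigmaK (n+2) i) (z i, z (sigmaK (n+2) i))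
          / (P (z i) * P (z (sigmaK (n+2) i)))) := by
    simp_rw [hLHS]
    rw [Finset.sum_comm]
    simp_rw [← Finset.mul_sum]
  have h2 : 2 * klD Q (fun z => ∏ j, P (z j))
      = ∑ z, Q z * (2 * Real.log (Q z / ∏ j, P (z j))) := by
    unfold klD
    rw [Finset.mul_sum]
    exact Finset.sum_congr rfl (fun z _ => by ring)
  have hmain : 2 * klD Q (fun z => ∏ j, P (z j))
      - ∑ i, klD (pairMarg Q i (sigmaK (n+2) i)) (fun p : 𝒳 × 𝒳 => P p.1 * P p.2)
      = (∑ z, Q z * Real.log (Q z / ∏ p, fA Q p z))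
        + ∑ z, Q z * Real.log (Q z / ∏ p, fB Q p z) := by
    rw [h1, h2, ← Finset.sum_sub_distrib, ← Finset.sum_add_distrib]
    refine Finset.sum_congr rfl (fun z _ => ?_)
    rcases eq_or_lt_of_le (hQ0 z) with hz | hz
    · rw [← hz]; ring
    · -- the pointwise log identity on the support of `Q`
      have hQne : Q z ≠ 0 := ne_of_gt hz
      have hPprod : (0:ℝ) < ∏ j, P (z j) := Finset.prod_pos (fun j _ => hPpos _)
      have hpmpos : ∀ i : Fin (n+2),
          0 < pairMarg Q i (sigmaK (n+2) i) (z i, z (sigmaK (n+2) i)) := fun i =>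
        lt_of_lt_of_le hz (le_pairMarg Q hQ0 i _ z)
      have hm1p : ∀ j : Fin (n+2), 0 < m1 Q j (z j) := fun j => hmpos j z hz
      have hEp : ∀ j : Fin (n+2), 0 < Ed Q j (z j) (z (finRotate (n+2) j)) := fun j =>
        hEposd j z hz
      have hEp' : ∀ p : Fin (n+2), 0 < Ed Q (sigmaK (n+2) p) (z (sigmaK (n+2) p)) (z p) := by
        intro p
        have h := hEp (sigmaK (n+2) p)
        rwa [hnx p] at h
      have hEplst : 0 < Ed Q (Fin.last (n+1)) (z (Fin.last (n+1))) (z 0) := by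
        have h := hEp (Fin.last (n+1))
        rwa [hnlst] at h
      have hpm_eq : ∀ i : Fin (n+2), pairMarg Q i (sigmaK (n+2) i) (z i, z (sigmaK (n+2) i))
          = Ed Q (sigmaK (n+2) i) (z (sigmaK (n+2) i)) (z i) := by
        intro i
        rw [pairMarg_swap]
        unfold Ed
        rw [hnx i]
      have e1 : Real.log (Q z / ∏ j, P (z j))
          = Real.log (Q z) - ∑ j, Real.log (P (z j)) := by
        rw [Real.log_div hQne (ne_of_gt hPprod),
          Real.log_prod (fun j _ => (hPpos (z j)).ne')]
      have e5 : ∑ i, Real.log (pairMarg Q i (sigmaK (n+2) i) (z i, z (sigmaK (n+2) i))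
            / (P (z i) * P (z (sigmaK (n+2) i))))
          = (∑ j, Real.log (Ed Q j (z j) (z (finRotate (n+2) j))))
            - 2 * ∑ j, Real.log (P (z j)) := by
        have e2 : ∀ i : Fin (n+2),
            Real.log (pairMarg Q i (sigmaK (n+2) i) (z i, z (sigmaK (n+2) i))
              / (P (z i) * P (z (sigmaK (n+2) i))))
            = Real.log (Ed Q (sigmaK (n+2) i) (z (sigmaK (n+2) i)) (z i))
              - (Real.log (P (z i)) + Real.log (P (z (sigmaK (n+2) i)))) := by
          intro i
          rw [hpm_eq i, Real.log_div (hEp' i).ne'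
            (mul_ne_zero (hPpos (z i)).ne' (hPpos (z (sigmaK (n+2) i))).ne'),
            Real.log_mul (hPpos (z i)).ne' (hPpos (z (sigmaK (n+2) i))).ne']
        rw [Finset.sum_congr rfl (fun i _ => e2 i), Finset.sum_sub_distrib,
          Finset.sum_add_distrib]
        have e3 : ∑ i, Real.log (Ed Q (sigmaK (n+2) i) (z (sigmaK (n+2) i)) (z i))
            = ∑ j, Real.log (Ed Q j (z j) (z (finRotate (n+2) j))) := by
          rw [← Equiv.sum_comp (sigmaK (n+2))
            (fun j => Real.log (Ed Q j (z j) (z (finRotate (n+2) j))))]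
          exact Finset.sum_congr rfl (fun i _ => by rw [hnx i])
        have e4 : ∑ i, Real.log (P (z (sigmaK (n+2) i))) = ∑ i, Real.log (P (z i)) :=
          Equiv.sum_comp (sigmaK (n+2)) (fun j => Real.log (P (z j)))
        rw [e3, e4]
        ring
      -- sums of the logs of the chain factors
      have e7 : ∑ p, Real.log (fA Q p z)
          = Real.log (m1 Q 0 (z 0))
            + ∑ p ∈ Finset.univ.erase (0 : Fin (n+2)),
                (Real.log (Ed Q (sigmaK (n+2) p) (z (sigmaK (n+2) p))
                    (z (finRotate (n+2) (sigmaK (n+2) p))))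
                  - Real.log (m1 Q (sigmaK (n+2) p) (z (sigmaK (n+2) p)))) := by
        rw [← Finset.add_sum_erase _ _ (Finset.mem_univ (0 : Fin (n+2))), fA_zero]
        congr 1
        refine Finset.sum_congr rfl (fun p hp => ?_)
        have hp0 : p ≠ 0 := Finset.ne_of_mem_erase hp
        rw [fA_ne Q hp0, Real.log_div (hEp' p).ne' (hm1p _).ne', hnx p]
      have e8 : ∑ p ∈ Finset.univ.erase (0 : Fin (n+2)),
            (Real.log (Ed Q (sigmaK (n+2) p) (z (sigmaK (n+2) p))
                (z (finRotate (n+2) (sigmaK (n+2) p))))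
              - Real.log (m1 Q (sigmaK (n+2) p) (z (sigmaK (n+2) p))))
          = ∑ j ∈ Finset.univ.erase (Fin.last (n+1)),
            (Real.log (Ed Q j (z j) (z (finRotate (n+2) j))) - Real.log (m1 Q j (z j))) := by
        refine Finset.sum_equiv (sigmaK (n+2)) ?_ ?_
        · intro p
          simp only [Finset.mem_erase, Finset.mem_univ, and_true]
          exact (not_congr (hσlst_iff p)).symm
        · intro p _
          rfl
      have mem0 : (0 : Fin (n+2)) ∈ Finset.univ.erase (Fin.last (n+1)) :=
        Finset.mem_erase.2 ⟨zero_ne_last, Finset.mem_univ _⟩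
      have e9 : ∑ p, Real.log (fB Q p z)
          = Real.log (m1 Q (Fin.last (n+1)) (z (Fin.last (n+1))))
            + ((Real.log (Ed Q (Fin.last (n+1)) (z (Fin.last (n+1)))
                  (z (finRotate (n+2) (Fin.last (n+1)))))
                - Real.log (m1 Q (Fin.last (n+1)) (z (Fin.last (n+1)))))
              + ∑ p ∈ (Finset.univ.erase (Fin.last (n+1))).erase (0 : Fin (n+2)),
                  Real.log (m1 Q p (z p))) := by
        rw [← Finset.add_sum_erase _ _ (Finset.mem_univ (Fin.last (n+1))), fB_lst]
        congr 1
        rw [← Finset.add_sum_erase _ _ mem0, fB_zero]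
        congr 1
        · rw [Real.log_div hEplst.ne' (hm1p _).ne', hnlst]
        · refine Finset.sum_congr rfl (fun p hp => ?_)
          have hpl : p ≠ Fin.last (n+1) :=
            Finset.ne_of_mem_erase (Finset.mem_of_mem_erase hp)
          have hp0 : p ≠ 0 := Finset.ne_of_mem_erase hp
          rw [fB_other Q hpl hp0]
      have hsumAB : (∑ p, Real.log (fA Q p z)) + (∑ p, Real.log (fB Q p z))
          = ∑ j, Real.log (Ed Q j (z j) (z (finRotate (n+2) j))) := by
        have d1 : ∑ j ∈ Finset.univ.erase (Fin.last (n+1)),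
              (Real.log (Ed Q j (z j) (z (finRotate (n+2) j))) - Real.log (m1 Q j (z j)))
            = (∑ j ∈ Finset.univ.erase (Fin.last (n+1)),
                Real.log (Ed Q j (z j) (z (finRotate (n+2) j))))
              - ∑ j ∈ Finset.univ.erase (Fin.last (n+1)), Real.log (m1 Q j (z j)) :=
          Finset.sum_sub_distrib _ _
        have d2 : Real.log (m1 Q 0 (z 0))
              + ∑ p ∈ (Finset.univ.erase (Fin.last (n+1))).erase (0 : Fin (n+2)),
                  Real.log (m1 Q p (z p))
            = ∑ j ∈ Finset.univ.erase (Fin.last (n+1)), Real.log (m1 Q j (z j)) :=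
          Finset.add_sum_erase _ (fun j => Real.log (m1 Q j (z j))) mem0
        have d3 : Real.log (Ed Q (Fin.last (n+1)) (z (Fin.last (n+1)))
                (z (finRotate (n+2) (Fin.last (n+1)))))
              + ∑ j ∈ Finset.univ.erase (Fin.last (n+1)),
                  Real.log (Ed Q j (z j) (z (finRotate (n+2) j)))
            = ∑ j, Real.log (Ed Q j (z j) (z (finRotate (n+2) j))) :=
          Finset.add_sum_erase _ (fun j => Real.log (Ed Q j (z j) (z (finRotate (n+2) j))))
            (Finset.mem_univ _)
        rw [e7, e8, e9]
        linarith [d1, d2, d3]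
      have eA : Real.log (Q z / ∏ p, fA Q p z)
          = Real.log (Q z) - ∑ p, Real.log (fA Q p z) := by
        rw [Real.log_div hQne
            (ne_of_gt (Finset.prod_pos (fun p _ => hfApos z hz p))),
          Real.log_prod (fun p _ => (hfApos z hz p).ne')]
      have eB : Real.log (Q z / ∏ p, fB Q p z)
          = Real.log (Q z) - ∑ p, Real.log (fB Q p z) := by
        rw [Real.log_div hQne
            (ne_of_gt (Finset.prod_pos (fun p _ => hfBpos z hz p))),
          Real.log_prod (fun p _ => (hfBpos z hz p).ne')]
      have key : 2 * Real.log (Q z / ∏ j, P (z j))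
            - (∑ i, Real.log (pairMarg Q i (sigmaK (n+2) i) (z i, z (sigmaK (n+2) i))
                / (P (z i) * P (z (sigmaK (n+2) i)))))
          = Real.log (Q z / ∏ p, fA Q p z) + Real.log (Q z / ∏ p, fB Q p z) := by
        rw [e1, e5, eA, eB]
        linarith [hsumAB]
      rw [← mul_add, ← key]
      ring
  linarith [hGA, hGB, hmain]

end MainIneq

/-- for every `K ≥ 2`, `ψ_K(P_XY) ≥ ψ₂(P_XY)`: among all cycle lengths,
transpositions (`K = 2`) minimize the rate function `ψ_K`. -/
theorem psiK_ge_psi2 {𝒳 𝒴 : Type*} [Fintype 𝒳] [Fintype 𝒴]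
    (P : 𝒳 → ℝ) (W : 𝒳 → 𝒴 → ℝ)
    (hP : IsPMF P) (hPpos : ∀ x, 0 < P x) (hW : ∀ x, IsPMF (W x))
    (K : ℕ) (hK : 2 ≤ K) :
    psi2 P W ≤ psiK K P W := by
  -- the Bhattacharyya distance is nonnegative
  have hbhat : ∀ x₁ x₂ : 𝒳, 0 ≤ bhat W x₁ x₂ := by
    intro x₁ x₂
    unfold bhat
    rw [neg_nonneg]
    apply Real.log_nonpos
    · exact Finset.sum_nonneg fun y _ => Real.sqrt_nonneg _
    · calc ∑ y, Real.sqrt (W x₁ y * W x₂ y)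
          = ∑ y, Real.sqrt (W x₁ y) * Real.sqrt (W x₂ y) :=
            Finset.sum_congr rfl fun y _ => Real.sqrt_mul ((hW x₁).1 y) _
        _ ≤ Real.sqrt (∑ y, W x₁ y) * Real.sqrt (∑ y, W x₂ y) :=
            Real.sum_sqrt_mul_sqrt_le _ (fun y => (hW x₁).1 y) (fun y => (hW x₂).1 y)
        _ = 1 := by rw [(hW x₁).2, (hW x₂).2, Real.sqrt_one, mul_one]
  have hdQnn : ∀ Q' : 𝒳 × 𝒳 → ℝ, (∀ p, 0 ≤ Q' p) → 0 ≤ dQ W Q' := fun Q' h =>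
    Finset.sum_nonneg fun p _ => mul_nonneg (h p) (hbhat _ _)
  have hPP1 : ∑ p : 𝒳 × 𝒳, P p.1 * P p.2 = 1 := by
    rw [Fintype.sum_prod_type]
    simp_rw [← Finset.mul_sum, hP.2, mul_one]
    exact hP.2
  have hkl2 : ∀ Q' : 𝒳 × 𝒳 → ℝ, IsPMF Q' →
      0 ≤ klD Q' (fun p : 𝒳 × 𝒳 => P p.1 * P p.2) :=
    fun Q' hQ' => gibbs Q' _ hQ'.1 hQ'.2
      (fun p => mul_nonneg (hPpos _).le (hPpos _).le) (le_of_eq hPP1)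
      (fun p _ => mul_pos (hPpos _) (hPpos _))
  have hbdd : BddBelow { v : ℝ | ∃ Q : 𝒳 × 𝒳 → ℝ, IsPMF Q ∧
      v = (1/2) * klD Q (fun p => P p.1 * P p.2) + dQ W Q } := by
    refine ⟨0, fun v hv => ?_⟩
    obtain ⟨Q', hQ', rfl⟩ := hv
    exact add_nonneg (mul_nonneg (by norm_num) (hkl2 Q' hQ')) (hdQnn Q' hQ'.1)
  have hpsile : ∀ Q' : 𝒳 × 𝒳 → ℝ, IsPMF Q' →
      psi2 P W ≤ (1/2) * klD Q' (fun p : 𝒳 × 𝒳 => P p.1 * P p.2) + dQ W Q' :=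
    fun Q' h => csInf_le hbdd ⟨Q', h, rfl⟩
  obtain ⟨n, rfl⟩ : ∃ n, K = n + 2 := ⟨K - 2, by omega⟩
  apply le_csInf
  · -- the defining set of `ψ_K` is nonempty: take the product distribution
    refine ⟨_, ⟨fun z => ∏ j, P (z j),
      ⟨fun z => Finset.prod_nonneg (fun j _ => (hPpos _).le), ?_⟩, rfl⟩⟩
    have h := (Finset.prod_univ_sum (fun _ : Fin (n+2) => (Finset.univ : Finset 𝒳))
      (fun _ x => P x)).symm
    rw [Fintype.piFinset_univ] at h
    rw [h, hP.2]
    simp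
  · rintro v ⟨Q, hQ, rfl⟩
    have hKpos : (0:ℝ) < ((n+2 : ℕ) : ℝ) := by positivity
    have hle : ∀ i : Fin (n+2), psi2 P W
        ≤ (1/2) * klD (pairMarg Q i (sigmaK (n+2) i)) (fun p : 𝒳 × 𝒳 => P p.1 * P p.2)
          + dQ W (pairMarg Q i (sigmaK (n+2) i)) := by
      intro i
      exact hpsile _ ⟨pairMarg_nonneg Q hQ.1 _ _, pairMarg_sum Q hQ.2 _ _⟩
    have havg : ((n+2:ℕ):ℝ) * psi2 P W
        ≤ ∑ i : Fin (n+2), ((1/2) * klD (pairMarg Q i (sigmaK (n+2) i))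
            (fun p : 𝒳 × 𝒳 => P p.1 * P p.2) + dQ W (pairMarg Q i (sigmaK (n+2) i))) := by
      have hsum := Finset.sum_le_sum (fun i (_ : i ∈ Finset.univ) => hle i)
      rw [Finset.sum_const, Finset.card_univ, Fintype.card_fin, nsmul_eq_mul] at hsum
      exact_mod_cast hsum
    have hmi := main_ineq P hPpos Q hQ.1 hQ.2
    have hsplit : ∑ i : Fin (n+2), ((1/2) * klD (pairMarg Q i (sigmaK (n+2) i))
            (fun p : 𝒳 × 𝒳 => P p.1 * P p.2) + dQ W (pairMarg Q i (sigmaK (n+2) i)))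
        = (1/2) * ∑ i : Fin (n+2), klD (pairMarg Q i (sigmaK (n+2) i))
            (fun p : 𝒳 × 𝒳 => P p.1 * P p.2)
          + ∑ i : Fin (n+2), dQ W (pairMarg Q i (sigmaK (n+2) i)) := by
      rw [Finset.sum_add_distrib, Finset.mul_sum]
    have hfin : ((n+2:ℕ):ℝ) * psi2 P W
        ≤ klD Q (fun z => ∏ j, P (z j)) + ∑ i : Fin (n+2), dQ W (pairMarg Q i (sigmaK (n+2) i)) := by
      rw [hsplit] at havg
      linarith
    rw [div_mul_eq_mul_div, div_mul_eq_mul_div, one_mul, one_mul, ← add_div]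
    rw [le_div_iff₀ hKpos]
    linarith
end
end

section
/- For every integer K ≥ 4: min over joint PMFs Q₁₂ on 𝒳² with equal marginals Q₁ = Q₂ of (1/K)·D_KL(Q₁ ‖ P_X) + ((K−1)/K)·D_KL(Q_{2|1} ‖ P_X | Q₁) + d(Q₁₂) is at least ψ₂(P_XY). In particular the left-hand side is nonincreasing in K down to K = 4, and at K = 4 it is already at least ψ₂(P_XY). -/
open Real BigOperators Finset
open scoped Classical

noncomputable section

/-- The relaxed rate function `φ_K(P_XY)`: the outer minimization is over pair PMFs
`Q₁₂` on `𝒳²`, and the inner minimization is over joint PMFs `Q` on `𝒳^K` all of whose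
`K - 1` consecutive pair marginals equal `Q₁₂` (the cycle is "broken"). -/
def phiK {𝒳 𝒴 : Type*} [Fintype 𝒳] [Fintype 𝒴] (K : ℕ)
    (P : 𝒳 → ℝ) (W : 𝒳 → 𝒴 → ℝ) : ℝ :=
  sInf { v : ℝ | ∃ Q12 : 𝒳 × 𝒳 → ℝ, IsPMF Q12 ∧
    v = sInf { w : ℝ | ∃ Q : (Fin K → 𝒳) → ℝ, IsPMF Q ∧
          (∀ (i : ℕ) (h : i + 1 < K),
            pairMarg Q ⟨i, Nat.lt_of_succ_lt h⟩ ⟨i + 1, h⟩ = Q12) ∧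
          w = (1 / (K : ℝ)) * klD Q (fun z => ∏ j, P (z j)) }
        + dQ W Q12 }

/-- First marginal of a pair PMF. -/
def marg1 {𝒳 : Type*} [Fintype 𝒳] (Q12 : 𝒳 × 𝒳 → ℝ) : 𝒳 → ℝ :=
  fun x => ∑ x₂, Q12 (x, x₂)

/-- Second marginal of a pair PMF. -/
def marg2 {𝒳 : Type*} [Fintype 𝒳] (Q12 : 𝒳 × 𝒳 → ℝ) : 𝒳 → ℝ :=
  fun x => ∑ x₁, Q12 (x₁, x)

/-- The conditional KL divergence `D_KL(Q_{2|1} ‖ P | Q₁)`, where `Q_{2|1}` is the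
conditional PMF of the second coordinate of `Q₁₂` given the first. -/
def condKL {𝒳 : Type*} [Fintype 𝒳] (Q12 : 𝒳 × 𝒳 → ℝ) (P : 𝒳 → ℝ) : ℝ :=
  ∑ p : 𝒳 × 𝒳, Q12 p * Real.log ((Q12 p / marg1 Q12 p.1) / P p.2)

/-- The Markov-chain form of `φ_K`: minimization over pair PMFs with equal marginals of
`(1/K)·D_KL(Q₁‖P) + ((K-1)/K)·D_KL(Q_{2|1}‖P|Q₁) + d(Q₁₂)`. -/
def markovForm {𝒳 𝒴 : Type*} [Fintype 𝒳] [Fintype 𝒴] (K : ℕ)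
    (P : 𝒳 → ℝ) (W : 𝒳 → 𝒴 → ℝ) : ℝ :=
  sInf { v : ℝ | ∃ Q12 : 𝒳 × 𝒳 → ℝ, IsPMF Q12 ∧ marg1 Q12 = marg2 Q12 ∧
    v = (1 / (K : ℝ)) * klD (marg1 Q12) P
      + (((K : ℝ) - 1) / (K : ℝ)) * condKL Q12 P + dQ W Q12 }

/-- Gibbs' inequality (nonnegativity of KL divergence), in a slightly general form. -/
lemma gibbs_s6 {α : Type*} [Fintype α] (Q P : α → ℝ) (hQ : IsPMF Q)
    (hP0 : ∀ a, 0 ≤ P a) (hPs : ∑ a, P a ≤ 1)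
    (hsupp : ∀ a, 0 < Q a → 0 < P a) : 0 ≤ klD Q P := by
  have key : ∀ a ∈ Finset.univ, Q a - P a ≤ Q a * Real.log (Q a / P a) := by
    intro a _
    rcases eq_or_lt_of_le (hQ.1 a) with h | h
    · rw [← h]; simpa using hP0 a
    · have hPa := hsupp a h
      have hlog : Real.log (P a / Q a) ≤ P a / Q a - 1 :=
        Real.log_le_sub_one_of_pos (by positivity)
      have hinv : Real.log (Q a / P a) = - Real.log (P a / Q a) := by
        rw [← Real.log_inv]; congr 1; field_simp
      have hmul : Q a * (P a / Q a) = P a := by field_simp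
      rw [hinv]
      nlinarith [mul_le_mul_of_nonneg_left hlog (le_of_lt h)]
  have hsum := Finset.sum_le_sum key
  rw [Finset.sum_sub_distrib, hQ.2] at hsum
  unfold klD
  linarith

lemma sqrt_mul_le_half_add (a b : ℝ) (ha : 0 ≤ a) (hb : 0 ≤ b) :
    Real.sqrt (a * b) ≤ (a + b) / 2 := by
  rw [Real.sqrt_mul ha]
  nlinarith [sq_nonneg (Real.sqrt a - Real.sqrt b), Real.sq_sqrt ha, Real.sq_sqrt hb,
    Real.sqrt_nonneg a, Real.sqrt_nonneg b]

lemma dQ_nonneg {𝒳 𝒴 : Type*} [Fintype 𝒳] [Fintype 𝒴] (W : 𝒳 → 𝒴 → ℝ)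
    (hW : ∀ x, IsPMF (W x)) (Q : 𝒳 × 𝒳 → ℝ) (hQ : ∀ p, 0 ≤ Q p) :
    0 ≤ dQ W Q :=
  Finset.sum_nonneg fun p _ => mul_nonneg (hQ p) (bhat_nonneg W hW p.1 p.2)

lemma marg1_nonneg {𝒳 : Type*} [Fintype 𝒳] (Q12 : 𝒳 × 𝒳 → ℝ)
    (hQ : ∀ p, 0 ≤ Q12 p) (x : 𝒳) : 0 ≤ marg1 Q12 x :=
  Finset.sum_nonneg fun _ _ => hQ _

lemma marg2_nonneg {𝒳 : Type*} [Fintype 𝒳] (Q12 : 𝒳 × 𝒳 → ℝ)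
    (hQ : ∀ p, 0 ≤ Q12 p) (x : 𝒳) : 0 ≤ marg2 Q12 x :=
  Finset.sum_nonneg fun _ _ => hQ _

lemma marg1_pos {𝒳 : Type*} [Fintype 𝒳] (Q12 : 𝒳 × 𝒳 → ℝ)
    (hQ : ∀ p, 0 ≤ Q12 p) (p : 𝒳 × 𝒳) (hp : 0 < Q12 p) : 0 < marg1 Q12 p.1 := by
  have : Q12 (p.1, p.2) ≤ marg1 Q12 p.1 :=
    Finset.single_le_sum (fun x _ => hQ (p.1, x)) (Finset.mem_univ p.2)
  simpa using lt_of_lt_of_le hp this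

lemma marg2_pos {𝒳 : Type*} [Fintype 𝒳] (Q12 : 𝒳 × 𝒳 → ℝ)
    (hQ : ∀ p, 0 ≤ Q12 p) (p : 𝒳 × 𝒳) (hp : 0 < Q12 p) : 0 < marg2 Q12 p.2 := by
  have : Q12 (p.1, p.2) ≤ marg2 Q12 p.2 :=
    Finset.single_le_sum (fun x _ => hQ (x, p.2)) (Finset.mem_univ p.1)
  simpa using lt_of_lt_of_le hp this

lemma marg1_sum {𝒳 : Type*} [Fintype 𝒳] (Q12 : 𝒳 × 𝒳 → ℝ) (h : IsPMF Q12) :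
    ∑ x, marg1 Q12 x = 1 := by
  unfold marg1
  rw [← h.2, Fintype.sum_prod_type]

lemma marg2_sum {𝒳 : Type*} [Fintype 𝒳] (Q12 : 𝒳 × 𝒳 → ℝ) (h : IsPMF Q12) :
    ∑ x, marg2 Q12 x = 1 := by
  unfold marg2
  rw [← h.2, Fintype.sum_prod_type_right]

lemma klD_marg1_eq {𝒳 : Type*} [Fintype 𝒳] (Q12 : 𝒳 × 𝒳 → ℝ) (P : 𝒳 → ℝ) :
    klD (marg1 Q12) P = ∑ p : 𝒳 × 𝒳, Q12 p * Real.log (marg1 Q12 p.1 / P p.1) := by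
  unfold klD
  rw [Fintype.sum_prod_type]
  exact Finset.sum_congr rfl fun x _ => by
    simp only [marg1, Finset.sum_mul]

lemma klD_marg2_eq {𝒳 : Type*} [Fintype 𝒳] (Q12 : 𝒳 × 𝒳 → ℝ) (P : 𝒳 → ℝ) :
    klD (marg2 Q12) P = ∑ p : 𝒳 × 𝒳, Q12 p * Real.log (marg2 Q12 p.2 / P p.2) := by
  unfold klD
  rw [Fintype.sum_prod_type_right]
  exact Finset.sum_congr rfl fun x _ => by
    simp only [marg2, Finset.sum_mul]

/-- Chain rule: `D(Q₁₂ ‖ P ⊗ P) = D(Q₁ ‖ P) + D(Q_{2|1} ‖ P | Q₁)`. -/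
lemma klD_chain {𝒳 : Type*} [Fintype 𝒳] (Q12 : 𝒳 × 𝒳 → ℝ) (P : 𝒳 → ℝ)
    (hQ : ∀ p, 0 ≤ Q12 p) (hP : ∀ x, 0 < P x) :
    klD Q12 (fun p => P p.1 * P p.2) = klD (marg1 Q12) P + condKL Q12 P := by
  rw [klD_marg1_eq, condKL, ← Finset.sum_add_distrib]
  unfold klD
  refine Finset.sum_congr rfl fun p _ => ?_
  rcases eq_or_lt_of_le (hQ p) with h | h
  · rw [← h]; ring
  · have h1 : 0 < marg1 Q12 p.1 := marg1_pos Q12 hQ p h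
    have harg : Q12 p / (P p.1 * P p.2)
        = (marg1 Q12 p.1 / P p.1) * ((Q12 p / marg1 Q12 p.1) / P p.2) := by
      field_simp
    rw [harg, Real.log_mul ((div_pos h1 (hP p.1)).ne')
      ((div_pos (div_pos h h1) (hP p.2)).ne')]
    ring

/-- `D(Q_{2|1} ‖ P | Q₁) = D(Q₁₂ ‖ Q₁ ⊗ Q₂) + D(Q₂ ‖ P)`. -/
lemma condKL_decomp {𝒳 : Type*} [Fintype 𝒳] (Q12 : 𝒳 × 𝒳 → ℝ) (P : 𝒳 → ℝ)
    (hQ : ∀ p, 0 ≤ Q12 p) (hP : ∀ x, 0 < P x) :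
    condKL Q12 P
      = klD Q12 (fun p => marg1 Q12 p.1 * marg2 Q12 p.2) + klD (marg2 Q12) P := by
  rw [klD_marg2_eq, condKL]
  unfold klD
  rw [← Finset.sum_add_distrib]
  refine Finset.sum_congr rfl fun p _ => ?_
  rcases eq_or_lt_of_le (hQ p) with h | h
  · rw [← h]; ring
  · have h1 : 0 < marg1 Q12 p.1 := marg1_pos Q12 hQ p h
    have h2 : 0 < marg2 Q12 p.2 := marg2_pos Q12 hQ p h
    have harg : (Q12 p / marg1 Q12 p.1) / P p.2
        = (Q12 p / (marg1 Q12 p.1 * marg2 Q12 p.2)) * (marg2 Q12 p.2 / P p.2) := by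
      field_simp
    rw [harg, Real.log_mul
      ((div_pos h (mul_pos h1 h2)).ne') ((div_pos h2 (hP p.2)).ne')]
    ring

/-- With equal marginals, the conditional divergence dominates the marginal one. -/
lemma condKL_ge {𝒳 : Type*} [Fintype 𝒳] (Q12 : 𝒳 × 𝒳 → ℝ) (P : 𝒳 → ℝ)
    (hQ : IsPMF Q12) (hP : ∀ x, 0 < P x) (heq : marg1 Q12 = marg2 Q12) :
    klD (marg1 Q12) P ≤ condKL Q12 P := by
  rw [condKL_decomp Q12 P hQ.1 hP, ← heq]
  have h0 : 0 ≤ klD Q12 (fun p => marg1 Q12 p.1 * marg1 Q12 p.2) := by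
    refine gibbs_s6 _ _ hQ (fun p => mul_nonneg (marg1_nonneg Q12 hQ.1 _)
      (marg1_nonneg Q12 hQ.1 _)) ?_ ?_
    · rw [Fintype.sum_prod_type]
      simp only [← Finset.mul_sum, ← Finset.sum_mul, marg1_sum Q12 hQ]
      norm_num
    · intro p hp
      refine mul_pos (marg1_pos Q12 hQ.1 p hp) ?_
      rw [heq]
      exact marg2_pos Q12 hQ.1 p hp
  linarith

/-- for every `K ≥ 4`, the Markov-chain form
`min_{Q₁₂ : Q₁ = Q₂} (1/K)·D_KL(Q₁‖P) + ((K-1)/K)·D_KL(Q_{2|1}‖P|Q₁) + d(Q₁₂)`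
is at least `ψ₂(P_XY)`. -/
theorem markovForm_ge_psi2 {𝒳 𝒴 : Type*} [Fintype 𝒳] [Fintype 𝒴]
    (P : 𝒳 → ℝ) (W : 𝒳 → 𝒴 → ℝ)
    (hP : IsPMF P) (hPpos : ∀ x, 0 < P x) (hW : ∀ x, IsPMF (W x))
    (K : ℕ) (hK : 4 ≤ K) :
    psi2 P W ≤ markovForm K P W := by
  unfold markovForm
  apply le_csInf
  · refine ⟨_, fun p => P p.1 * P p.2, ⟨⟨fun p => mul_nonneg (hP.1 p.1) (hP.1 p.2), ?_⟩,
      ?_, rfl⟩⟩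
    · rw [Fintype.sum_prod_type]
      simp [← Finset.mul_sum, hP.2]
    · funext x
      simp [marg1, marg2, ← Finset.mul_sum, ← Finset.sum_mul, hP.2]
  · rintro v ⟨Q12, hQpmf, hmargeq, rfl⟩
    have hbdd : BddBelow { v : ℝ | ∃ Q : 𝒳 × 𝒳 → ℝ, IsPMF Q ∧
        v = (1/2) * klD Q (fun p => P p.1 * P p.2) + dQ W Q } := by
      refine ⟨0, ?_⟩
      rintro w ⟨Q, hQ, rfl⟩
      have hkl : 0 ≤ klD Q (fun p => P p.1 * P p.2) := by
        refine gibbs_s6 _ _ hQ (fun p => (mul_pos (hPpos p.1) (hPpos p.2)).le) ?_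
          (fun p _ => mul_pos (hPpos p.1) (hPpos p.2))
        rw [Fintype.sum_prod_type]
        simp [← Finset.mul_sum, hP.2]
      have hd : 0 ≤ dQ W Q := dQ_nonneg W hW Q hQ.1
      linarith
    have h1 : psi2 P W ≤ (1/2) * klD Q12 (fun p => P p.1 * P p.2) + dQ W Q12 :=
      csInf_le hbdd ⟨Q12, hQpmf, rfl⟩
    set A := klD (marg1 Q12) P with hA
    set B := condKL Q12 P with hB
    have hchain : klD Q12 (fun p => P p.1 * P p.2) = A + B :=
      klD_chain Q12 P hQpmf.1 hPpos
    have hAB : A ≤ B := condKL_ge Q12 P hQpmf hPpos hmargeq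
    have hk : (4 : ℝ) ≤ (K : ℝ) := by exact_mod_cast hK
    have hkpos : (0 : ℝ) < (K : ℝ) := by linarith
    have hfrac : (1/2) * (A + B)
        ≤ (1 / (K : ℝ)) * A + (((K : ℝ) - 1) / (K : ℝ)) * B := by
      have e : (1 / (K : ℝ)) * A + (((K : ℝ) - 1) / (K : ℝ)) * B - (1/2) * (A + B)
          = (((K : ℝ) - 2) / (2 * (K : ℝ))) * (B - A) := by
        field_simp; ring
      nlinarith [mul_nonneg (div_nonneg (by linarith : (0:ℝ) ≤ (K : ℝ) - 2)
        (by linarith : (0:ℝ) ≤ 2 * (K : ℝ))) (by linarith : (0:ℝ) ≤ B - A)]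
    rw [hchain] at h1
    linarith
end
end

section
/- If β > 1/ψ₂(P_XY), then there exists M₀ depending only on P_XY and β such that for all M ≥ M₀, the perfect-reconstruction failure probability satisfies FP(ξ=0) ≤ 2·M^{2(1−β·ψ₂(P_XY))}. In particular FP(ξ=0) = O(M^{2(1−βψ₂(P_XY))}) and vanishes polynomially in M. -/
open Real BigOperators Finset
open scoped Classical

noncomputable section
set_option linter.unusedSectionVars false
set_option linter.unusedVariables false


/-- Probability of a source realization: `M` i.i.d. fragments of `L` i.i.d. `P`-symbols. -/
def srcMass {𝒳 : Type*} (P : 𝒳 → ℝ) {M L : ℕ} (x : Fin M → Fin L → 𝒳) : ℝ :=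
  ∏ i, ∏ j, P (x i j)

/-- Conditional probability of the reference sequence `y` given the source `x`,
through the memoryless channel `W`. -/
def chMass {𝒳 𝒴 : Type*} (W : 𝒳 → 𝒴 → ℝ) {M L : ℕ}
    (x : Fin M → Fin L → 𝒳) (y : Fin M → Fin L → 𝒴) : ℝ :=
  ∏ i, ∏ j, W (x i j) (y i j)

/-- The sequence obtained by permuting the `M` fragments of `x` by `τ`. -/
def permuteFrag {𝒳 : Type*} {M L : ℕ} (τ : Equiv.Perm (Fin M))
    (x : Fin M → Fin L → 𝒳) : Fin M → Fin L → 𝒳 := fun i => x (τ i)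

/-- `recon` is a maximum-likelihood reconstruction: given the multiset of fragments of the
source `x` and the reference `y`, it outputs a permutation of the fragments of `x`
maximizing the likelihood of `y`. -/
def IsMLRecon {𝒳 𝒴 : Type*} (W : 𝒳 → 𝒴 → ℝ) {M L : ℕ}
    (recon : (Fin M → Fin L → 𝒳) → (Fin M → Fin L → 𝒴) → (Fin M → Fin L → 𝒳)) : Prop :=
  ∀ x y, (∃ τ : Equiv.Perm (Fin M), recon x y = permuteFrag τ x) ∧
    ∀ τ : Equiv.Perm (Fin M), chMass W (permuteFrag τ x) y ≤ chMass W (recon x y) y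

/-- Failure probability of perfect reconstruction (`ξ = 0`, zero distortion): the
probability that the reconstructed sequence differs from the source sequence. -/
def FP0 {𝒳 𝒴 : Type*} [Fintype 𝒳] [Fintype 𝒴] (P : 𝒳 → ℝ) (W : 𝒳 → 𝒴 → ℝ) {M L : ℕ}
    (recon : (Fin M → Fin L → 𝒳) → (Fin M → Fin L → 𝒴) → (Fin M → Fin L → 𝒳)) : ℝ :=
  ∑ x : Fin M → Fin L → 𝒳, ∑ y : Fin M → Fin L → 𝒴,
    srcMass P x * chMass W x y * (if recon x y ≠ x then 1 else 0)

/-- Failure probability at zero distortion and failure level `ξ`: the probability that at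
least a fraction `ξ` of the fragments are misplaced. -/
def FPxi {𝒳 𝒴 : Type*} [Fintype 𝒳] [Fintype 𝒴] (P : 𝒳 → ℝ) (W : 𝒳 → 𝒴 → ℝ) {M L : ℕ}
    (recon : (Fin M → Fin L → 𝒳) → (Fin M → Fin L → 𝒴) → (Fin M → Fin L → 𝒳))
    (ξ : ℝ) : ℝ :=
  ∑ x : Fin M → Fin L → 𝒳, ∑ y : Fin M → Fin L → 𝒴,
    srcMass P x * chMass W x y *
      (if ξ ≤ ((Finset.univ.filter fun i : Fin M => recon x y i ≠ x i).card : ℝ) / M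
        then 1 else 0)

namespace FP0Aux

variable {𝒳 𝒴 : Type*} [Fintype 𝒳] [Fintype 𝒴] (P : 𝒳 → ℝ) (W : 𝒳 → 𝒴 → ℝ)

/-- Bhattacharyya coefficient. -/
def rho (a b : 𝒳) : ℝ := ∑ y, Real.sqrt (W a y * W b y)

def gg (a b : 𝒳) : ℝ := Real.sqrt (P a) * rho W a b * Real.sqrt (P b)

def lam2 : ℝ := ∑ a, ∑ b, (gg P W a b) ^ 2

def lam : ℝ := Real.sqrt (lam2 P W)

variable {P W}

lemma rho_nonneg (a b : 𝒳) : 0 ≤ rho W a b :=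
  Finset.sum_nonneg fun _ _ => Real.sqrt_nonneg _

lemma rho_diag (hW : ∀ x, IsPMF (W x)) (a : 𝒳) : rho W a a = 1 := by
  unfold rho
  have : ∀ y ∈ (univ : Finset 𝒴), Real.sqrt (W a y * W a y) = W a y := by
    intro y _; exact Real.sqrt_mul_self ((hW a).1 y)
  rw [Finset.sum_congr rfl this, (hW a).2]

lemma rho_le_one (hW : ∀ x, IsPMF (W x)) (a b : 𝒳) : rho W a b ≤ 1 := by
  have h := Finset.sum_mul_sq_le_sq_mul_sq univ (fun y => Real.sqrt (W a y))
    (fun y => Real.sqrt (W b y))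
  have ha : ∑ y, Real.sqrt (W a y) ^ 2 = 1 := by
    have : ∀ y ∈ (univ : Finset 𝒴), Real.sqrt (W a y) ^ 2 = W a y := fun y _ =>
      Real.sq_sqrt ((hW a).1 y)
    rw [Finset.sum_congr rfl this, (hW a).2]
  have hb : ∑ y, Real.sqrt (W b y) ^ 2 = 1 := by
    have : ∀ y ∈ (univ : Finset 𝒴), Real.sqrt (W b y) ^ 2 = W b y := fun y _ =>
      Real.sq_sqrt ((hW b).1 y)
    rw [Finset.sum_congr rfl this, (hW b).2]
  have hr : rho W a b = ∑ y, Real.sqrt (W a y) * Real.sqrt (W b y) := by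
    unfold rho
    exact Finset.sum_congr rfl fun y _ => Real.sqrt_mul ((hW a).1 y) _
  rw [ha, hb, one_mul] at h
  nlinarith [rho_nonneg (W := W) a b, hr ▸ h]

lemma gg_nonneg (hP : ∀ a, 0 ≤ P a) (a b : 𝒳) : 0 ≤ gg P W a b :=
  mul_nonneg (mul_nonneg (Real.sqrt_nonneg _) (rho_nonneg a b)) (Real.sqrt_nonneg _)

lemma gg_diag (hP : ∀ a, 0 ≤ P a) (hW : ∀ x, IsPMF (W x)) (a : 𝒳) : gg P W a a = P a := by
  unfold gg
  rw [rho_diag hW, mul_one, Real.mul_self_sqrt (hP a)]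

lemma gg_sq (hP : ∀ a, 0 ≤ P a) (a b : 𝒳) :
    gg P W a b ^ 2 = P a * P b * rho W a b ^ 2 := by
  unfold gg
  rw [mul_pow, mul_pow, Real.sq_sqrt (hP a), Real.sq_sqrt (hP b)]; ring

lemma nonempty_X (hP : IsPMF P) : Nonempty 𝒳 := by
  by_contra h
  rw [not_nonempty_iff] at h
  have := hP.2
  rw [Finset.univ_eq_empty, Finset.sum_empty] at this
  norm_num at this

lemma lam2_pos (hP : IsPMF P) (hPpos : ∀ x, 0 < P x) (hW : ∀ x, IsPMF (W x)) :
    0 < lam2 P W := by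
  obtain ⟨a⟩ := nonempty_X hP
  have h1 : 0 < ∑ b, gg P W a b ^ 2 := by
    apply Finset.sum_pos' (fun b _ => sq_nonneg _)
    refine ⟨a, mem_univ a, ?_⟩
    rw [gg_diag (fun x => (hPpos x).le) hW]
    exact pow_pos (hPpos a) 2
  exact Finset.sum_pos' (fun x _ => Finset.sum_nonneg fun b _ => sq_nonneg _) ⟨a, mem_univ a, h1⟩

lemma lam2_le_one (hP : IsPMF P) (hW : ∀ x, IsPMF (W x)) : lam2 P W ≤ 1 := by
  have : lam2 P W ≤ ∑ a, ∑ b, P a * P b := by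
    apply Finset.sum_le_sum; intro a _
    apply Finset.sum_le_sum; intro b _
    rw [gg_sq hP.1]
    have h1 : rho W a b ^ 2 ≤ 1 := by
      nlinarith [rho_le_one hW a b, rho_nonneg (W := W) a b]
    nlinarith [mul_nonneg (hP.1 a) (hP.1 b)]
  calc lam2 P W ≤ ∑ a, ∑ b, P a * P b := this
    _ = (∑ a, P a) * (∑ b, P b) := by rw [Finset.sum_mul_sum]
    _ = 1 := by rw [hP.2, one_mul]

lemma lam_nonneg : 0 ≤ lam P W := Real.sqrt_nonneg _

lemma lam_le_one (hP : IsPMF P) (hW : ∀ x, IsPMF (W x)) : lam P W ≤ 1 := by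
  unfold lam
  rw [show (1:ℝ) = Real.sqrt 1 by rw [Real.sqrt_one]]
  exact Real.sqrt_le_sqrt (lam2_le_one hP hW)

lemma bhat_eq (a b : 𝒳) : bhat W a b = - Real.log (rho W a b) := rfl

/-- KL divergence nonnegativity. -/
lemma klD_nonneg {α : Type*} [Fintype α] {Q R : α → ℝ} (hQ : IsPMF Q) (hR : IsPMF R)
    (hRpos : ∀ a, 0 < R a) : 0 ≤ klD Q R := by
  have key : ∀ a, Q a - R a ≤ Q a * Real.log (Q a / R a) := by
    intro a
    rcases eq_or_lt_of_le (hQ.1 a) with h | h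
    · rw [← h]; simp [(hRpos a).le]
    · have h2 : Real.log (R a / Q a) ≤ R a / Q a - 1 :=
        Real.log_le_sub_one_of_pos (div_pos (hRpos a) h)
      have h3 : Real.log (Q a / R a) = - Real.log (R a / Q a) := by
        rw [← Real.log_inv]; congr 1
        field_simp
      nlinarith [mul_le_mul_of_nonneg_left h2 h.le,
        mul_div_cancel₀ (R a) (ne_of_gt h)]
  calc (0:ℝ) = ∑ a, Q a - ∑ a, R a := by rw [hQ.2, hR.2]; ring
    _ = ∑ a, (Q a - R a) := by rw [Finset.sum_sub_distrib]
    _ ≤ ∑ a, Q a * Real.log (Q a / R a) := Finset.sum_le_sum fun a _ => key a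
    _ = klD Q R := rfl

lemma dQ_nonneg (hW : ∀ x, IsPMF (W x)) {Q : 𝒳 × 𝒳 → ℝ} (hQ : IsPMF Q) :
    0 ≤ dQ W Q := by
  apply Finset.sum_nonneg
  intro p _
  apply mul_nonneg (hQ.1 p)
  rw [bhat_eq]
  simp only [neg_nonneg]
  exact Real.log_nonpos (rho_nonneg _ _) (rho_le_one hW _ _)

/-- The key bound `λ² ≤ exp (-2 ψ₂)`. -/
lemma lam2_le_exp (hP : IsPMF P) (hPpos : ∀ x, 0 < P x) (hW : ∀ x, IsPMF (W x)) :
    lam2 P W ≤ Real.exp (-2 * psi2 P W) := by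
  set S := lam2 P W with hS
  have hSpos : 0 < S := lam2_pos hP hPpos hW
  -- the Gibbs optimizer
  set Q : 𝒳 × 𝒳 → ℝ := fun p => P p.1 * P p.2 * rho W p.1 p.2 ^ 2 / S with hQdef
  have hsum : ∑ p : 𝒳 × 𝒳, P p.1 * P p.2 * rho W p.1 p.2 ^ 2 = S := by
    rw [hS]; unfold lam2
    rw [Fintype.sum_prod_type]
    exact Finset.sum_congr rfl fun a _ => Finset.sum_congr rfl fun b _ => (gg_sq hP.1 a b).symm
  have hQpmf : IsPMF Q := by
    constructor
    · intro p
      apply div_nonneg _ hSpos.le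
      exact mul_nonneg (mul_nonneg (hPpos p.1).le (hPpos p.2).le) (sq_nonneg _)
    · show ∑ p : 𝒳 × 𝒳, P p.1 * P p.2 * rho W p.1 p.2 ^ 2 / S = 1
      rw [← Finset.sum_div, hsum, div_self (ne_of_gt hSpos)]
  have hQ1 : ∑ p : 𝒳 × 𝒳, Q p = 1 := hQpmf.2
  set T := ∑ p : 𝒳 × 𝒳, Q p * Real.log (rho W p.1 p.2) with hT
  have hkl : klD Q (fun p : 𝒳 × 𝒳 => P p.1 * P p.2) = 2 * T - Real.log S := by
    unfold klD
    have hterm : ∀ p : 𝒳 × 𝒳, Q p * Real.log (Q p / (P p.1 * P p.2)) =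
        2 * (Q p * Real.log (rho W p.1 p.2)) - Q p * Real.log S := by
      intro p
      by_cases hr : rho W p.1 p.2 = 0
      · have : Q p = 0 := by rw [hQdef]; simp [hr]
        rw [this]; ring_nf
      · have hrpos : 0 < rho W p.1 p.2 := lt_of_le_of_ne (rho_nonneg _ _) (Ne.symm hr)
        have hPP : (0:ℝ) < P p.1 * P p.2 := mul_pos (hPpos _) (hPpos _)
        have hqd : Q p / (P p.1 * P p.2) = rho W p.1 p.2 ^ 2 / S := by
          show P p.1 * P p.2 * rho W p.1 p.2 ^ 2 / S / (P p.1 * P p.2) = rho W p.1 p.2 ^ 2 / S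
          rw [div_div, mul_comm S, ← div_div, mul_div_cancel_left₀ _ hPP.ne']
        rw [hqd, Real.log_div (by positivity) (ne_of_gt hSpos), Real.log_pow]
        push_cast
        ring
    rw [Finset.sum_congr rfl fun p _ => hterm p, Finset.sum_sub_distrib, ← Finset.sum_mul,
      hQ1, one_mul, ← Finset.mul_sum, ← hT]
  have hd : dQ W Q = - T := by
    unfold dQ
    rw [hT, ← Finset.sum_neg_distrib]
    exact Finset.sum_congr rfl fun p _ => by rw [bhat_eq]; ring
  have hmem : (1/2 : ℝ) * klD Q (fun p : 𝒳 × 𝒳 => P p.1 * P p.2) + dQ W Q =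
      -(1/2) * Real.log S := by
    rw [hkl, hd]; ring
  have hpsi : psi2 P W ≤ -(1/2) * Real.log S := by
    apply csInf_le
    · refine ⟨0, ?_⟩
      rintro v ⟨Q', hQ', rfl⟩
      have h1 := klD_nonneg hQ' ⟨fun p => (mul_pos (hPpos p.1) (hPpos p.2)).le, ?_⟩
        (fun p => mul_pos (hPpos p.1) (hPpos p.2))
      · have h2 := dQ_nonneg hW hQ'
        linarith
      · rw [Fintype.sum_prod_type]
        simp_rw [← Finset.mul_sum]
        rw [← Finset.sum_mul, hP.2, one_mul]
    · exact ⟨Q, hQpmf, hmem.symm⟩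
  have hlog : Real.log S ≤ -2 * psi2 P W := by linarith
  calc S = Real.exp (Real.log S) := (Real.exp_log hSpos).symm
    _ ≤ Real.exp (-2 * psi2 P W) := Real.exp_le_exp.mpr hlog

lemma lam_le_exp (hP : IsPMF P) (hPpos : ∀ x, 0 < P x) (hW : ∀ x, IsPMF (W x)) :
    lam P W ≤ Real.exp (- psi2 P W) := by
  unfold lam
  have h2 : Real.exp (-2 * psi2 P W) = Real.exp (- psi2 P W) ^ 2 := by
    rw [← Real.exp_nat_mul]; congr 1; push_cast; ring
  calc Real.sqrt (lam2 P W) ≤ Real.sqrt (Real.exp (-2 * psi2 P W)) :=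
        Real.sqrt_le_sqrt (lam2_le_exp hP hPpos hW)
    _ = Real.exp (- psi2 P W) := by rw [h2, Real.sqrt_sq (Real.exp_pos _).le]

/-- Sum over function space of a product factorizes. -/
lemma sum_fn_prod {ι κ : Type*} [Fintype ι] [DecidableEq ι] [Fintype κ] (f : ι → κ → ℝ) :
    ∑ v : ι → κ, ∏ i, f i (v i) = ∏ i, ∑ c, f i c := by
  rw [Finset.prod_univ_sum (fun _ => (univ : Finset κ)) f, Fintype.piFinset_univ]

lemma sqrt_prod {ι : Type*} (s : Finset ι) (f : ι → ℝ) (hf : ∀ i ∈ s, 0 ≤ f i) :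
    Real.sqrt (∏ i ∈ s, f i) = ∏ i ∈ s, Real.sqrt (f i) := by
  induction s using Finset.cons_induction with
  | empty => simp
  | cons a s ha ih =>
    rw [Finset.prod_cons, Finset.prod_cons, Real.sqrt_mul (hf a (Finset.mem_cons_self a s)),
      ih fun i hi => hf i (Finset.mem_cons_of_mem hi)]

/-- Frobenius norm of a square matrix. -/
def nF {𝒳 : Type*} [Fintype 𝒳] (A : Matrix 𝒳 𝒳 ℝ) : ℝ :=
  Real.sqrt (∑ a, ∑ b, (A a b) ^ 2)

lemma nF_nonneg {𝒳 : Type*} [Fintype 𝒳] (A : Matrix 𝒳 𝒳 ℝ) : 0 ≤ nF A :=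
  Real.sqrt_nonneg _

lemma sq_nF {𝒳 : Type*} [Fintype 𝒳] (A : Matrix 𝒳 𝒳 ℝ) :
    nF A ^ 2 = ∑ a, ∑ b, (A a b) ^ 2 :=
  Real.sq_sqrt (Finset.sum_nonneg fun a _ => Finset.sum_nonneg fun b _ => sq_nonneg _)

lemma trace_mul_le {𝒳 : Type*} [Fintype 𝒳] (A B : Matrix 𝒳 𝒳 ℝ) :
    ∑ c, (A * B) c c ≤ nF A * nF B := by
  have h1 : ∑ c, (A * B) c c = ∑ p : 𝒳 × 𝒳, A p.1 p.2 * B p.2 p.1 := by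
    rw [Fintype.sum_prod_type]
    exact Finset.sum_congr rfl fun c _ => Matrix.mul_apply
  have h2 := Finset.sum_mul_sq_le_sq_mul_sq univ (fun p : 𝒳 × 𝒳 => A p.1 p.2)
    (fun p : 𝒳 × 𝒳 => B p.2 p.1)
  have hA : ∑ p : 𝒳 × 𝒳, (A p.1 p.2) ^ 2 = nF A ^ 2 := by
    rw [sq_nF, Fintype.sum_prod_type]
  have hB : ∑ p : 𝒳 × 𝒳, (B p.2 p.1) ^ 2 = nF B ^ 2 := by
    rw [sq_nF, Fintype.sum_prod_type]
    exact Finset.sum_comm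
  rw [hA, hB] at h2
  nlinarith [nF_nonneg A, nF_nonneg B, h1,
    mul_nonneg (nF_nonneg A) (nF_nonneg B)]

lemma nF_mul_le {𝒳 : Type*} [Fintype 𝒳] (A B : Matrix 𝒳 𝒳 ℝ) :
    nF (A * B) ≤ nF A * nF B := by
  have key : ∑ a, ∑ c, ((A * B) a c) ^ 2 ≤ (nF A * nF B) ^ 2 := by
    have h1 : ∀ a c : 𝒳, ((A * B) a c) ^ 2 ≤ (∑ b, (A a b) ^ 2) * (∑ b, (B b c) ^ 2) := by
      intro a c
      rw [Matrix.mul_apply]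
      exact Finset.sum_mul_sq_le_sq_mul_sq univ (fun b => A a b) (fun b => B b c)
    calc ∑ a, ∑ c, ((A * B) a c) ^ 2
        ≤ ∑ a, ∑ c, (∑ b, (A a b) ^ 2) * (∑ b, (B b c) ^ 2) :=
          Finset.sum_le_sum fun a _ => Finset.sum_le_sum fun c _ => h1 a c
      _ = (∑ a, ∑ b, (A a b) ^ 2) * (∑ b, ∑ c, (B b c) ^ 2) := by
          rw [Finset.sum_mul]
          exact Finset.sum_congr rfl fun a _ => by rw [← Finset.mul_sum, Finset.sum_comm]
      _ = (nF A * nF B) ^ 2 := by rw [mul_pow, sq_nF, sq_nF]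
  have := Real.sqrt_le_sqrt key
  rwa [Real.sqrt_sq (mul_nonneg (nF_nonneg A) (nF_nonneg B))] at this

lemma nF_pow_le {𝒳 : Type*} [Fintype 𝒳] (A : Matrix 𝒳 𝒳 ℝ) :
    ∀ m : ℕ, 1 ≤ m → nF (A ^ m) ≤ nF A ^ m := by
  intro m
  induction m with
  | zero => omega
  | succ n ih =>
    intro _
    rcases Nat.eq_zero_or_pos n with h | h
    · subst h; simp
    · have hn : 1 ≤ n := h
      rw [pow_succ, pow_succ]
      calc nF (A ^ n * A) ≤ nF (A ^ n) * nF A := nF_mul_le _ _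
        _ ≤ nF A ^ n * nF A :=
          mul_le_mul_of_nonneg_right (ih hn) (nF_nonneg A)

lemma trace_pow_le {𝒳 : Type*} [Fintype 𝒳] (A : Matrix 𝒳 𝒳 ℝ) (k : ℕ) (hk : 2 ≤ k) :
    ∑ c, (A ^ k) c c ≤ nF A ^ k := by
  obtain ⟨n, rfl⟩ : ∃ n, k = n + 1 := ⟨k - 1, by omega⟩
  have hn : 1 ≤ n := by omega
  rw [pow_succ]
  calc ∑ c, (A ^ n * A) c c ≤ nF (A ^ n) * nF A := trace_mul_le _ _
    _ ≤ nF A ^ n * nF A := mul_le_mul_of_nonneg_right (nF_pow_le A n hn) (nF_nonneg A)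
    _ = nF A ^ (n + 1) := by rw [pow_succ]

section Machinery

variable {𝒳 𝒴 : Type*} [Fintype 𝒳] [Fintype 𝒴] {P : 𝒳 → ℝ} {W : 𝒳 → 𝒴 → ℝ}

/-- Summing out one coordinate against the PMF `P`. -/
lemma coord_reduce [Nonempty 𝒳] {M : ℕ} (hP1 : ∑ a, P a = 1) (i₀ : Fin M)
    (Φ : (Fin M → 𝒳) → 𝒳 → ℝ)
    (hΦ : ∀ v w : Fin M → 𝒳, (∀ j, j ≠ i₀ → v j = w j) → Φ v = Φ w) :
    ∑ v : Fin M → 𝒳, Φ v (v i₀) = ∑ v : Fin M → 𝒳, P (v i₀) * ∑ c, Φ v c := by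
  classical
  set e := (Equiv.piSplitAt i₀ (fun _ : Fin M => 𝒳)).symm with he
  have hgen : ∀ (F : (Fin M → 𝒳) → ℝ), ∑ v : Fin M → 𝒳, F v =
      ∑ c : 𝒳, ∑ w : (j : { j // j ≠ i₀ }) → 𝒳, F (e (c, w)) := by
    intro F
    rw [← Equiv.sum_comp e F, Fintype.sum_prod_type]
  have hval : ∀ c w, e (c, w) i₀ = c := by
    intro c w
    rw [he, Equiv.piSplitAt_symm_apply, dif_pos rfl]
  have hoff : ∀ c c' w, Φ (e (c, w)) = Φ (e (c', w)) := by
    intro c c' w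
    apply hΦ
    intro j hj
    rw [he, Equiv.piSplitAt_symm_apply, Equiv.piSplitAt_symm_apply, dif_neg hj, dif_neg hj]
  obtain ⟨c₀⟩ := ‹Nonempty 𝒳›
  rw [hgen (fun v => Φ v (v i₀)), hgen (fun v => P (v i₀) * ∑ c, Φ v c)]
  have hL : ∀ c w, Φ (e (c, w)) (e (c, w) i₀) = Φ (e (c₀, w)) c := by
    intro c w; rw [hval, hoff c c₀ w]
  have hR : ∀ c w, P (e (c, w) i₀) * ∑ c', Φ (e (c, w)) c' =
      P c * ∑ c', Φ (e (c₀, w)) c' := by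
    intro c w; rw [hval, hoff c c₀ w]
  simp only [hL, hR]
  rw [Finset.sum_comm]
  conv_rhs => rw [Finset.sum_comm]
  apply Finset.sum_congr rfl
  intro w _
  rw [← Finset.sum_mul, hP1, one_mul]

variable (P W)

def GM : Matrix 𝒳 𝒳 ℝ := Matrix.of (gg P W)

def Sg {M : ℕ} (σ : Equiv.Perm (Fin M)) : ℝ :=
  ∑ v : Fin M → 𝒳, ∏ i, gg P W (v i) (v (σ i))

def TT {M : ℕ} (σ : Equiv.Perm (Fin M)) (a : Fin M) (m : ℕ) : ℝ :=
  ∑ v : Fin M → 𝒳, ((GM P W) ^ m) (v a) (v (σ a)) * ∏ i ∈ univ.erase a, gg P W (v i) (v (σ i))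

variable {P W}

lemma GM_apply (a b : 𝒳) : GM P W a b = gg P W a b := rfl

lemma nF_GM : nF (GM P W) = lam P W := rfl

lemma Sg_nonneg (hP : ∀ a, 0 ≤ P a) {M : ℕ} (σ : Equiv.Perm (Fin M)) : 0 ≤ Sg P W σ :=
  Finset.sum_nonneg fun v _ => Finset.prod_nonneg fun i _ => gg_nonneg hP _ _

lemma Sg_one (hP : IsPMF P) (hW : ∀ x, IsPMF (W x)) {M : ℕ} :
    Sg P W (1 : Equiv.Perm (Fin M)) = 1 := by
  unfold Sg
  have h1 : ∀ v : Fin M → 𝒳, ∏ i, gg P W (v i) (v ((1 : Equiv.Perm (Fin M)) i)) =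
      ∏ i, P (v i) := by
    intro v
    exact Finset.prod_congr rfl fun i _ => by
      rw [Equiv.Perm.one_apply, gg_diag hP.1 hW]
  rw [Finset.sum_congr rfl fun v _ => h1 v, sum_fn_prod (fun _ c => P c)]
  rw [Finset.prod_congr rfl fun (i : Fin M) _ => hP.2, Finset.prod_const_one]

lemma TT_one (hP : IsPMF P) (hW : ∀ x, IsPMF (W x)) {M : ℕ} (σ : Equiv.Perm (Fin M))
    (a : Fin M) : TT P W σ a 1 = Sg P W σ := by
  unfold TT Sg
  apply Finset.sum_congr rfl
  intro v _
  rw [pow_one, GM_apply]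
  exact Finset.mul_prod_erase univ (fun i => gg P W (v i) (v (σ i))) (mem_univ a)

lemma TT_step (hP : IsPMF P) (hPpos : ∀ x, 0 < P x) (hW : ∀ x, IsPMF (W x)) {M : ℕ}
    (σ : Equiv.Perm (Fin M)) (a : Fin M) (m : ℕ) (ha : σ a ≠ a) :
    TT P W σ a m = TT P W (Equiv.swap (σ a) (σ (σ a)) * σ) a (m + 1) := by
  classical
  have hne : Nonempty 𝒳 := nonempty_X hP
  set i₀ := σ a with hi₀
  set b := σ i₀ with hb
  set σ' := Equiv.swap i₀ b * σ with hσ'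
  have hi₀a : i₀ ≠ a := ha
  have hbi₀ : b ≠ i₀ := by
    intro h
    exact hi₀a (σ.injective (hb ▸ h))
  have hσ'a : σ' a = b := by
    rw [hσ', Equiv.Perm.mul_apply, ← hi₀, Equiv.swap_apply_left]
  have hσ'i₀ : σ' i₀ = i₀ := by
    rw [hσ', Equiv.Perm.mul_apply, ← hb, Equiv.swap_apply_right]
  have hσ'x : ∀ x, x ≠ a → x ≠ i₀ → σ' x = σ x := by
    intro x hxa hxi
    rw [hσ', Equiv.Perm.mul_apply]
    apply Equiv.swap_apply_of_ne_of_ne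
    · intro h; exact hxa (σ.injective (hi₀ ▸ h))
    · intro h; exact hxi (σ.injective (hb ▸ h))
  -- the function Φ
  set R : (Fin M → 𝒳) → ℝ := fun v => ∏ i ∈ (univ.erase a).erase i₀, gg P W (v i) (v (σ i))
    with hR
  set Φ : (Fin M → 𝒳) → 𝒳 → ℝ := fun v c =>
    ((GM P W) ^ m) (v a) c * (gg P W c (v b) * R v) with hΦdef
  have hRindep : ∀ v w : Fin M → 𝒳, (∀ j, j ≠ i₀ → v j = w j) → R v = R w := by
    intro v w h
    apply Finset.prod_congr rfl
    intro i hi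
    have hia : i ≠ a := (Finset.mem_erase.mp (Finset.mem_erase.mp hi).2).1
    have hii : i ≠ i₀ := (Finset.mem_erase.mp hi).1
    have hσi : σ i ≠ i₀ := fun h => hia (σ.injective (hi₀ ▸ h))
    rw [h i hii, h (σ i) hσi]
  have hΦindep : ∀ v w : Fin M → 𝒳, (∀ j, j ≠ i₀ → v j = w j) → Φ v = Φ w := by
    intro v w h
    funext c
    rw [hΦdef]
    simp only []
    rw [h a (Ne.symm hi₀a), h b hbi₀, hRindep v w h]
  -- LHS as Σ Φ v (v i₀)
  have hL : TT P W σ a m = ∑ v : Fin M → 𝒳, Φ v (v i₀) := by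
    unfold TT
    apply Finset.sum_congr rfl
    intro v _
    have h1 : Φ v (v i₀) = ((GM P W) ^ m) (v a) (v i₀) *
        (gg P W (v i₀) (v b) * R v) := rfl
    rw [h1, hR, hb]
    simp only []
    rw [Finset.mul_prod_erase (univ.erase a) (fun i => gg P W (v i) (v (σ i)))
      (Finset.mem_erase.mpr ⟨hi₀a, mem_univ i₀⟩)]
  rw [hL, coord_reduce hP.2 i₀ Φ hΦindep]
  -- RHS
  unfold TT
  apply Finset.sum_congr rfl
  intro v _
  have hsum : ∑ c, Φ v c = ((GM P W) ^ (m + 1)) (v a) (v b) * R v := by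
    rw [pow_succ, Matrix.mul_apply, Finset.sum_mul]
    apply Finset.sum_congr rfl
    intro c _
    rw [hΦdef]
    simp only [GM_apply]
    ring
  rw [hsum, hσ'a]
  have hprod : ∏ i ∈ univ.erase a, gg P W (v i) (v (σ' i)) = P (v i₀) * R v := by
    rw [← Finset.mul_prod_erase (univ.erase a) _ (Finset.mem_erase.mpr ⟨hi₀a, mem_univ i₀⟩),
      hσ'i₀, gg_diag hP.1 hW, hR]
    congr 1
    apply Finset.prod_congr rfl
    intro i hi
    have hia : i ≠ a := (Finset.mem_erase.mp (Finset.mem_erase.mp hi).2).1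
    have hii : i ≠ i₀ := (Finset.mem_erase.mp hi).1
    rw [hσ'x i hia hii]
  rw [hprod]
  ring

lemma TT_close (hP : IsPMF P) (hPpos : ∀ x, 0 < P x) (hW : ∀ x, IsPMF (W x)) {M : ℕ}
    (σ : Equiv.Perm (Fin M)) (a : Fin M) (m : ℕ) (hfix : σ a = a) :
    TT P W σ a m = (∑ c, ((GM P W) ^ m) c c) * Sg P W σ := by
  classical
  have hne : Nonempty 𝒳 := nonempty_X hP
  set R : (Fin M → 𝒳) → ℝ := fun v => ∏ i ∈ univ.erase a, gg P W (v i) (v (σ i)) with hR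
  set Φ : (Fin M → 𝒳) → 𝒳 → ℝ := fun v c => ((GM P W) ^ m) c c * R v with hΦdef
  have hRindep : ∀ v w : Fin M → 𝒳, (∀ j, j ≠ a → v j = w j) → R v = R w := by
    intro v w h
    apply Finset.prod_congr rfl
    intro i hi
    have hia : i ≠ a := (Finset.mem_erase.mp hi).1
    have hσi : σ i ≠ a := by
      intro hh
      exact hia (σ.injective (by rw [hh, hfix]))
    rw [h i hia, h (σ i) hσi]
  have hΦindep : ∀ v w : Fin M → 𝒳, (∀ j, j ≠ a → v j = w j) → Φ v = Φ w := by
    intro v w h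
    funext c
    rw [hΦdef]; simp only []
    rw [hRindep v w h]
  have hL : TT P W σ a m = ∑ v : Fin M → 𝒳, Φ v (v a) := by
    unfold TT
    apply Finset.sum_congr rfl
    intro v _
    rw [hΦdef]; simp only []
    rw [hfix, hR]
  rw [hL, coord_reduce hP.2 a Φ hΦindep]
  have hSg : Sg P W σ = ∑ v : Fin M → 𝒳, P (v a) * R v := by
    unfold Sg
    apply Finset.sum_congr rfl
    intro v _
    rw [← Finset.mul_prod_erase univ _ (mem_univ a), hfix, gg_diag hP.1 hW, hR]
  rw [hSg, Finset.mul_sum]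
  apply Finset.sum_congr rfl
  intro v _
  rw [hΦdef]; simp only []
  rw [← Finset.sum_mul]
  ring

section Supp

variable {M : ℕ} (σ : Equiv.Perm (Fin M)) (a : Fin M)

lemma supp_facts (ha : σ a ≠ a) :
    ((Equiv.swap (σ a) (σ (σ a)) * σ).support ⊆ σ.support.erase (σ a)) ∧
    (σ (σ a) ≠ a → σ.support ⊆ insert (σ a) (Equiv.swap (σ a) (σ (σ a)) * σ).support) ∧
    (σ (σ a) = a → σ.support ⊆ insert (σ a) (insert a (Equiv.swap (σ a) (σ (σ a)) * σ).support)) := by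
  classical
  set i₀ := σ a with hi₀
  set b := σ i₀ with hb
  set σ' := Equiv.swap i₀ b * σ with hσ'
  have hi₀a : i₀ ≠ a := ha
  have hbi₀ : b ≠ i₀ := fun h => hi₀a (σ.injective (hb ▸ h))
  have hσ'a : σ' a = b := by
    rw [hσ', Equiv.Perm.mul_apply, ← hi₀, Equiv.swap_apply_left]
  have hσ'i₀ : σ' i₀ = i₀ := by
    rw [hσ', Equiv.Perm.mul_apply, ← hb, Equiv.swap_apply_right]
  have hσ'x : ∀ x, x ≠ a → x ≠ i₀ → σ' x = σ x := by
    intro x hxa hxi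
    rw [hσ', Equiv.Perm.mul_apply]
    apply Equiv.swap_apply_of_ne_of_ne
    · intro h; exact hxa (σ.injective (hi₀ ▸ h))
    · intro h; exact hxi (σ.injective (hb ▸ h))
  refine ⟨?_, ?_, ?_⟩
  · intro x hx
    rw [Equiv.Perm.mem_support] at hx
    have hxi : x ≠ i₀ := by
      intro h; subst h; exact hx hσ'i₀
    rw [Finset.mem_erase]
    refine ⟨hxi, ?_⟩
    rw [Equiv.Perm.mem_support]
    by_cases hxa : x = a
    · subst hxa; exact ha
    · rw [← hσ'x x hxa hxi]; exact hx
  · intro hba x hx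
    rw [Equiv.Perm.mem_support] at hx
    rw [Finset.mem_insert]
    by_cases hxi : x = i₀
    · exact Or.inl hxi
    · right
      rw [Equiv.Perm.mem_support]
      by_cases hxa : x = a
      · subst hxa; rw [hσ'a]; exact hba
      · rw [hσ'x x hxa hxi]; exact hx
  · intro hba x hx
    rw [Equiv.Perm.mem_support] at hx
    rw [Finset.mem_insert, Finset.mem_insert]
    by_cases hxi : x = i₀
    · exact Or.inl hxi
    · by_cases hxa : x = a
      · exact Or.inr (Or.inl hxa)
      · refine Or.inr (Or.inr ?_)
        rw [Equiv.Perm.mem_support, hσ'x x hxa hxi]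
        exact hx

end Supp

/-- The main bound: `Sg σ ≤ λ^{|supp σ|}`, via strong induction on the support. -/
lemma main_bound (hP : IsPMF P) (hPpos : ∀ x, 0 < P x) (hW : ∀ x, IsPMF (W x)) {M : ℕ} :
    ∀ n : ℕ, ∀ σ : Equiv.Perm (Fin M), σ.support.card ≤ n →
      (Sg P W σ ≤ lam P W ^ σ.support.card ∧
       ∀ a m, σ a ≠ a → TT P W σ a (m + 1) ≤ lam P W ^ (m + σ.support.card)) := by
  intro n
  induction n with
  | zero =>
    intro σ hσ
    have h0 : σ.support.card = 0 := Nat.le_zero.mp hσ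
    have hσ1 : σ = 1 := Equiv.Perm.support_eq_empty_iff.mp (Finset.card_eq_zero.mp h0)
    constructor
    · rw [h0, pow_zero, hσ1, Sg_one hP hW]
    · intro a m ha
      exact absurd (by rw [hσ1]; rfl) ha
  | succ n ih =>
    intro σ hσ
    have hTT : ∀ a m, σ a ≠ a → TT P W σ a (m + 1) ≤ lam P W ^ (m + σ.support.card) := by
      intro a m ha
      obtain ⟨hsub, hsup1, hsup2⟩ := supp_facts σ a ha
      have hstep0 := TT_step hP hPpos hW σ a (m + 1) ha
      set i₀ := σ a with hi₀
      set b := σ i₀ with hb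
      set σ' := Equiv.swap i₀ b * σ with hσ'def
      have hi₀a : i₀ ≠ a := ha
      have hi₀mem : i₀ ∈ σ.support := by
        rw [Equiv.Perm.mem_support]
        intro h
        exact hi₀a (σ.injective (h.trans hi₀))
      have hamem : a ∈ σ.support := Equiv.Perm.mem_support.mpr ha
      have hcard' : σ'.support.card ≤ σ.support.card - 1 := by
        calc σ'.support.card ≤ (σ.support.erase i₀).card := Finset.card_le_card hsub
          _ = σ.support.card - 1 := Finset.card_erase_of_mem hi₀mem
      have hcard'' : σ'.support.card ≤ n := by
        have h2 : 1 ≤ σ.support.card := Finset.card_pos.mpr ⟨a, hamem⟩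
        omega
      have hstep : TT P W σ a (m + 1) = TT P W σ' a (m + 2) := hstep0
      by_cases hclose : σ' a = a
      · -- closing: b = a
        have hba : b = a := by
          have : σ' a = b := by
            rw [hσ'def, Equiv.Perm.mul_apply, ← hi₀, Equiv.swap_apply_left]
          rw [← this, hclose]
        have hclose_eq : TT P W σ' a (m + 2) =
            (∑ c, ((GM P W) ^ (m + 2)) c c) * Sg P W σ' :=
          TT_close hP hPpos hW σ' a (m + 2) hclose
        have htr : ∑ c, ((GM P W) ^ (m + 2)) c c ≤ lam P W ^ (m + 2) := by
          have := trace_pow_le (GM P W) (m + 2) (by omega)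
          rwa [nF_GM] at this
        have hSg' : Sg P W σ' ≤ lam P W ^ σ'.support.card := (ih σ' hcard'').1
        have hcard2 : σ.support.card ≤ σ'.support.card + 2 := by
          have := Finset.card_le_card (hsup2 hba)
          have h1 := Finset.card_insert_le i₀ (insert a σ'.support)
          have h2 := Finset.card_insert_le a σ'.support
          omega
        calc TT P W σ a (m + 1) = (∑ c, ((GM P W) ^ (m + 2)) c c) * Sg P W σ' := by
              rw [hstep, hclose_eq]
          _ ≤ lam P W ^ (m + 2) * lam P W ^ σ'.support.card := by
              apply mul_le_mul htr hSg' (Sg_nonneg hP.1 σ') (pow_nonneg lam_nonneg _)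
          _ = lam P W ^ (m + 2 + σ'.support.card) := by rw [← pow_add]
          _ ≤ lam P W ^ (m + σ.support.card) := by
              apply pow_le_pow_of_le_one lam_nonneg (lam_le_one hP hW)
              omega
      · -- non-closing
        have hba : b ≠ a := by
          intro h
          apply hclose
          rw [hσ'def, Equiv.Perm.mul_apply, ← hi₀, Equiv.swap_apply_left, h]
        have hT' : TT P W σ' a (m + 2) ≤ lam P W ^ (m + 1 + σ'.support.card) :=
          (ih σ' hcard'').2 a (m + 1) (by
            rw [hσ'def, Equiv.Perm.mul_apply, ← hi₀, Equiv.swap_apply_left]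
            exact hba)
        have hcard1 : σ.support.card ≤ σ'.support.card + 1 := by
          have := Finset.card_le_card (hsup1 hba)
          have h1 := Finset.card_insert_le i₀ σ'.support
          omega
        calc TT P W σ a (m + 1) = TT P W σ' a (m + 2) := hstep
          _ ≤ lam P W ^ (m + 1 + σ'.support.card) := hT'
          _ ≤ lam P W ^ (m + σ.support.card) := by
              apply pow_le_pow_of_le_one lam_nonneg (lam_le_one hP hW)
              omega
    refine ⟨?_, hTT⟩
    by_cases hσ1 : σ = 1
    · rw [hσ1, Sg_one hP hW]
      have : (1 : Equiv.Perm (Fin M)).support.card = 0 := by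
        rw [Equiv.Perm.support_one, Finset.card_empty]
      rw [this, pow_zero]
    · have : ∃ a, σ a ≠ a := by
        by_contra h
        push_neg at h
        exact hσ1 (Equiv.ext h)
      obtain ⟨a, ha⟩ := this
      have := hTT a 0 ha
      rw [TT_one hP hW σ a] at this
      rwa [zero_add] at this

end Machinery

section Chain

variable {𝒳 𝒴 : Type*} [Fintype 𝒳] [Fintype 𝒴] {P : 𝒳 → ℝ} {W : 𝒳 → 𝒴 → ℝ}

lemma srcMass_nonneg (hP : ∀ a, 0 ≤ P a) {M L : ℕ} (x : Fin M → Fin L → 𝒳) :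
    0 ≤ srcMass P x :=
  Finset.prod_nonneg fun i _ => Finset.prod_nonneg fun j _ => hP _

lemma chMass_nonneg (hW : ∀ x, IsPMF (W x)) {M L : ℕ} (x : Fin M → Fin L → 𝒳)
    (y : Fin M → Fin L → 𝒴) : 0 ≤ chMass W x y :=
  Finset.prod_nonneg fun i _ => Finset.prod_nonneg fun j _ => (hW _).1 _

lemma sum_srcMass (hP : IsPMF P) {M L : ℕ} :
    ∑ x : Fin M → Fin L → 𝒳, srcMass P x = 1 := by
  unfold srcMass
  rw [sum_fn_prod (fun (_ : Fin M) (w : Fin L → 𝒳) => ∏ j, P (w j))]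
  have h1 : ∀ i : Fin M, ∑ w : Fin L → 𝒳, ∏ j, P (w j) = 1 := by
    intro i
    rw [sum_fn_prod (fun (_ : Fin L) (c : 𝒳) => P c)]
    rw [Finset.prod_congr rfl fun (j : Fin L) _ => hP.2, Finset.prod_const_one]
  rw [Finset.prod_congr rfl fun i _ => h1 i, Finset.prod_const_one]

lemma sum_chMass (hW : ∀ x, IsPMF (W x)) {M L : ℕ} (x : Fin M → Fin L → 𝒳) :
    ∑ y : Fin M → Fin L → 𝒴, chMass W x y = 1 := by
  unfold chMass
  rw [sum_fn_prod (fun (i : Fin M) (w : Fin L → 𝒴) => ∏ j, W (x i j) (w j))]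
  have h1 : ∀ i : Fin M, ∑ w : Fin L → 𝒴, ∏ j, W (x i j) (w j) = 1 := by
    intro i
    rw [sum_fn_prod (fun (j : Fin L) (c : 𝒴) => W (x i j) c)]
    rw [Finset.prod_congr rfl fun (j : Fin L) _ => (hW (x i j)).2, Finset.prod_const_one]
  rw [Finset.prod_congr rfl fun i _ => h1 i, Finset.prod_const_one]

lemma FP0_le_one (hP : IsPMF P) (hW : ∀ x, IsPMF (W x)) {M L : ℕ}
    (recon : (Fin M → Fin L → 𝒳) → (Fin M → Fin L → 𝒴) → (Fin M → Fin L → 𝒳)) :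
    FP0 P W recon ≤ 1 := by
  unfold FP0
  have h1 : ∀ x y, srcMass P x * chMass W x y * (if recon x y ≠ x then (1:ℝ) else 0) ≤
      srcMass P x * chMass W x y := by
    intro x y
    apply mul_le_of_le_one_right (mul_nonneg (srcMass_nonneg hP.1 x) (chMass_nonneg hW x y))
    split <;> norm_num
  calc ∑ x : Fin M → Fin L → 𝒳, ∑ y : Fin M → Fin L → 𝒴,
        srcMass P x * chMass W x y * (if recon x y ≠ x then (1:ℝ) else 0)
      ≤ ∑ x : Fin M → Fin L → 𝒳, ∑ y : Fin M → Fin L → 𝒴, srcMass P x * chMass W x y :=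
        Finset.sum_le_sum fun x _ => Finset.sum_le_sum fun y _ => h1 x y
    _ = ∑ x : Fin M → Fin L → 𝒳, srcMass P x := by
        apply Finset.sum_congr rfl
        intro x _
        rw [← Finset.mul_sum, sum_chMass hW x, mul_one]
    _ = 1 := sum_srcMass hP

/-- Bhattacharyya step: the `y`-sum of the geometric mean of channel masses. -/
lemma sum_sqrt_ch (hW : ∀ x, IsPMF (W x)) {M L : ℕ} (x x' : Fin M → Fin L → 𝒳) :
    ∑ y : Fin M → Fin L → 𝒴, Real.sqrt (chMass W x y * chMass W x' y) =
      ∏ i, ∏ j, rho W (x i j) (x' i j) := by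
  have h1 : ∀ y : Fin M → Fin L → 𝒴, Real.sqrt (chMass W x y * chMass W x' y) =
      ∏ i, ∏ j, Real.sqrt (W (x i j) (y i j) * W (x' i j) (y i j)) := by
    intro y
    unfold chMass
    rw [← Finset.prod_mul_distrib]
    rw [sqrt_prod univ _ (fun i _ => by
      rw [← Finset.prod_mul_distrib]
      exact Finset.prod_nonneg fun j _ => mul_nonneg ((hW _).1 _) ((hW _).1 _))]
    apply Finset.prod_congr rfl
    intro i _
    rw [← Finset.prod_mul_distrib]
    exact sqrt_prod univ _ fun j _ => mul_nonneg ((hW _).1 _) ((hW _).1 _)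
  rw [Finset.sum_congr rfl fun y _ => h1 y]
  rw [sum_fn_prod (fun (i : Fin M) (w : Fin L → 𝒴) =>
    ∏ j, Real.sqrt (W (x i j) (w j) * W (x' i j) (w j)))]
  apply Finset.prod_congr rfl
  intro i _
  rw [sum_fn_prod (fun (j : Fin L) (c : 𝒴) => Real.sqrt (W (x i j) c * W (x' i j) c))]
  rfl

/-- The `x`-average of the Bhattacharyya product equals `(Sg τ)^L`. -/
lemma sum_src_rho (hP : IsPMF P) {M L : ℕ} (τ : Equiv.Perm (Fin M)) :
    ∑ x : Fin M → Fin L → 𝒳, srcMass P x * ∏ i, ∏ j, rho W (x i j) (x (τ i) j) =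
      Sg P W τ ^ L := by
  classical
  have h1 : ∀ x : Fin M → Fin L → 𝒳, srcMass P x * ∏ i, ∏ j, rho W (x i j) (x (τ i) j) =
      ∏ i, ∏ j, (P (x i j) * rho W (x i j) (x (τ i) j)) := by
    intro x
    unfold srcMass
    rw [← Finset.prod_mul_distrib]
    apply Finset.prod_congr rfl
    intro i _
    rw [← Finset.prod_mul_distrib]
  rw [Finset.sum_congr rfl fun x _ => h1 x]
  -- swap the two coordinates
  set e : (Fin L → Fin M → 𝒳) ≃ (Fin M → Fin L → 𝒳) :=
    ⟨Function.swap, Function.swap, fun _ => rfl, fun _ => rfl⟩ with he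
  rw [← Equiv.sum_comp e (fun x : Fin M → Fin L → 𝒳 =>
    ∏ i, ∏ j, (P (x i j) * rho W (x i j) (x (τ i) j)))]
  have h2 : ∀ z : Fin L → Fin M → 𝒳,
      (∏ i, ∏ j, (P (e z i j) * rho W (e z i j) (e z (τ i) j))) =
      ∏ j, ∏ i, (P (z j i) * rho W (z j i) (z j (τ i))) := by
    intro z
    exact Finset.prod_comm
  rw [Finset.sum_congr rfl fun z _ => h2 z]
  rw [sum_fn_prod (fun (j : Fin L) (v : Fin M → 𝒳) =>
    ∏ i, (P (v i) * rho W (v i) (v (τ i))))]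
  have h3 : ∀ v : Fin M → 𝒳, (∏ i, (P (v i) * rho W (v i) (v (τ i)))) =
      ∏ i, gg P W (v i) (v (τ i)) := by
    intro v
    have ha : ∏ i, Real.sqrt (P (v (τ i))) = ∏ i, Real.sqrt (P (v i)) :=
      Equiv.prod_comp τ (fun i => Real.sqrt (P (v i)))
    calc ∏ i, (P (v i) * rho W (v i) (v (τ i)))
        = ∏ i, (Real.sqrt (P (v i)) * rho W (v i) (v (τ i)) * Real.sqrt (P (v i))) :=
          Finset.prod_congr rfl fun i _ => by
            have hps := Real.mul_self_sqrt (hP.1 (v i))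
            linear_combination (- rho W (v i) (v (τ i))) * hps
      _ = (∏ i, Real.sqrt (P (v i)) * rho W (v i) (v (τ i))) *
            ∏ i, Real.sqrt (P (v i)) := Finset.prod_mul_distrib
      _ = (∏ i, Real.sqrt (P (v i)) * rho W (v i) (v (τ i))) *
            ∏ i, Real.sqrt (P (v (τ i))) := by rw [ha]
      _ = ∏ i, (Real.sqrt (P (v i)) * rho W (v i) (v (τ i)) *
            Real.sqrt (P (v (τ i)))) := Finset.prod_mul_distrib.symm
      _ = ∏ i, gg P W (v i) (v (τ i)) := rfl
  have h4 : (∑ v : Fin M → 𝒳, ∏ i, (P (v i) * rho W (v i) (v (τ i)))) = Sg P W τ := by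
    unfold Sg
    exact Finset.sum_congr rfl fun v _ => h3 v
  rw [Finset.prod_congr rfl fun (j : Fin L) _ => h4, Finset.prod_const, Finset.card_univ,
    Fintype.card_fin]

lemma FP0_le_sum (hP : IsPMF P) (hPpos : ∀ x, 0 < P x) (hW : ∀ x, IsPMF (W x)) {M L : ℕ}
    (recon : (Fin M → Fin L → 𝒳) → (Fin M → Fin L → 𝒴) → (Fin M → Fin L → 𝒳))
    (hrec : IsMLRecon W recon) :
    FP0 P W recon ≤
      ∑ τ ∈ (univ : Finset (Equiv.Perm (Fin M))).erase 1, Sg P W τ ^ L := by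
  classical
  set E := (univ : Finset (Equiv.Perm (Fin M))).erase 1 with hE
  have key : ∀ x y, srcMass P x * chMass W x y * (if recon x y ≠ x then (1:ℝ) else 0) ≤
      ∑ τ ∈ E, srcMass P x * Real.sqrt (chMass W x y * chMass W (permuteFrag τ x) y) := by
    intro x y
    have hnn : ∀ τ ∈ E, 0 ≤ srcMass P x *
        Real.sqrt (chMass W x y * chMass W (permuteFrag τ x) y) :=
      fun τ _ => mul_nonneg (srcMass_nonneg hP.1 x) (Real.sqrt_nonneg _)
    by_cases hne : recon x y ≠ x
    · rw [if_pos hne]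
      obtain ⟨⟨τ₀, hτ₀⟩, hmax⟩ := hrec x y
      have hid : permuteFrag (1 : Equiv.Perm (Fin M)) x = x := rfl
      have hτ₀1 : τ₀ ∈ E := by
        rw [hE, Finset.mem_erase]
        refine ⟨?_, mem_univ _⟩
        intro h
        subst h
        rw [hτ₀, hid] at hne
        exact hne rfl
      have hch : chMass W x y ≤ chMass W (permuteFrag τ₀ x) y := by
        have := hmax 1
        rw [hid, hτ₀] at this
        exact this
      have hsq : chMass W x y ≤
          Real.sqrt (chMass W x y * chMass W (permuteFrag τ₀ x) y) := by
        have h0 : 0 ≤ chMass W x y := chMass_nonneg hW x y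
        calc chMass W x y = Real.sqrt (chMass W x y * chMass W x y) :=
              (Real.sqrt_mul_self h0).symm
          _ ≤ Real.sqrt (chMass W x y * chMass W (permuteFrag τ₀ x) y) :=
              Real.sqrt_le_sqrt (mul_le_mul_of_nonneg_left hch h0)
      calc srcMass P x * chMass W x y * 1 ≤
            srcMass P x * Real.sqrt (chMass W x y * chMass W (permuteFrag τ₀ x) y) := by
            rw [mul_one]
            exact mul_le_mul_of_nonneg_left hsq (srcMass_nonneg hP.1 x)
        _ ≤ ∑ τ ∈ E, srcMass P x *
              Real.sqrt (chMass W x y * chMass W (permuteFrag τ x) y) :=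
            Finset.single_le_sum hnn hτ₀1
    · rw [if_neg hne, mul_zero]
      exact Finset.sum_nonneg hnn
  calc FP0 P W recon ≤ ∑ x : Fin M → Fin L → 𝒳, ∑ y : Fin M → Fin L → 𝒴,
        ∑ τ ∈ E, srcMass P x * Real.sqrt (chMass W x y * chMass W (permuteFrag τ x) y) :=
      Finset.sum_le_sum fun x _ => Finset.sum_le_sum fun y _ => key x y
    _ = ∑ τ ∈ E, ∑ x : Fin M → Fin L → 𝒳, ∑ y : Fin M → Fin L → 𝒴,
          srcMass P x * Real.sqrt (chMass W x y * chMass W (permuteFrag τ x) y) := by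
        have s1 : ∀ x : Fin M → Fin L → 𝒳,
            (∑ y : Fin M → Fin L → 𝒴, ∑ τ ∈ E,
              srcMass P x * Real.sqrt (chMass W x y * chMass W (permuteFrag τ x) y)) =
            ∑ τ ∈ E, ∑ y : Fin M → Fin L → 𝒴,
              srcMass P x * Real.sqrt (chMass W x y * chMass W (permuteFrag τ x) y) :=
          fun x => Finset.sum_comm
        rw [Finset.sum_congr rfl fun x _ => s1 x, Finset.sum_comm]
    _ = ∑ τ ∈ E, ∑ x : Fin M → Fin L → 𝒳, srcMass P x *
          ∑ y : Fin M → Fin L → 𝒴,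
            Real.sqrt (chMass W x y * chMass W (permuteFrag τ x) y) := by
        apply Finset.sum_congr rfl
        intro τ _
        apply Finset.sum_congr rfl
        intro x _
        rw [Finset.mul_sum]
    _ = ∑ τ ∈ E, Sg P W τ ^ L := by
        apply Finset.sum_congr rfl
        intro τ _
        rw [Finset.sum_congr rfl fun x (_ : x ∈ univ) => by
          rw [sum_sqrt_ch hW x (permuteFrag τ x)]]
        exact sum_src_rho hP τ

end Chain

section Count

lemma card_fixed_support {M : ℕ} (s : Finset (Fin M)) :
    ((univ : Finset (Equiv.Perm (Fin M))).filter (fun τ => τ.support ⊆ s)).card ≤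
      s.card.factorial := by
  classical
  have hmaps : ∀ τ : Equiv.Perm (Fin M), τ.support ⊆ s → ∀ x : Fin M, x ∈ s ↔ τ x ∈ s := by
    intro τ hτ x
    constructor
    · intro hx
      by_cases hxs : τ x = x
      · rwa [hxs]
      · exact hτ (Equiv.Perm.apply_mem_support.mpr (Equiv.Perm.mem_support.mpr hxs))
    · intro hx
      by_cases hxs : τ x = x
      · rwa [← hxs]
      · exact hτ (Equiv.Perm.mem_support.mpr hxs)
  set f : Equiv.Perm (Fin M) → Equiv.Perm {x // x ∈ s} := fun τ =>
    if h : ∀ x, τ x ∈ s ↔ x ∈ s then τ.subtypePerm h else 1 with hf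
  have hinj : Set.InjOn f
      ((univ : Finset (Equiv.Perm (Fin M))).filter (fun τ => τ.support ⊆ s)) := by
    intro τ₁ h₁ τ₂ h₂ heq
    rw [Finset.coe_filter] at h₁ h₂
    have hs₁ : τ₁.support ⊆ s := h₁.2
    have hs₂ : τ₂.support ⊆ s := h₂.2
    rw [hf] at heq
    simp only [dif_pos (fun x => (hmaps τ₁ hs₁ x).symm), dif_pos (fun x => (hmaps τ₂ hs₂ x).symm)] at heq
    apply Equiv.ext
    intro x
    by_cases hx : x ∈ s
    · have hxx := DFunLike.congr_fun heq (⟨x, hx⟩ : {x // x ∈ s})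
      rw [Equiv.Perm.subtypePerm_apply, Equiv.Perm.subtypePerm_apply] at hxx
      exact Subtype.ext_iff.mp hxx
    · have h1 : τ₁ x = x := Equiv.Perm.notMem_support.mp (fun hm => hx (hs₁ hm))
      have h2 : τ₂ x = x := Equiv.Perm.notMem_support.mp (fun hm => hx (hs₂ hm))
      rw [h1, h2]
  calc ((univ : Finset (Equiv.Perm (Fin M))).filter (fun τ => τ.support ⊆ s)).card
      ≤ (univ : Finset (Equiv.Perm {x // x ∈ s})).card :=
        Finset.card_le_card_of_injOn f (fun _ _ => mem_univ _) hinj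
    _ = s.card.factorial := by
        rw [Finset.card_univ, Fintype.card_perm, Fintype.card_coe]

/-- Geometric-series tail bound. -/
lemma geom_tail (u : ℝ) (hu0 : 0 ≤ u) (hu : u ≤ 1/2) (N : ℕ) :
    ∑ j ∈ range N, u ^ j ≤ 2 := by
  have h1 : (∑ j ∈ range N, u ^ j) * (1 - u) = 1 - u ^ N := by
    have := geom_sum_mul u N
    linarith [this]
  have h2 : u ^ N ≥ 0 := pow_nonneg hu0 N
  nlinarith [Finset.sum_nonneg fun j (_ : j ∈ range N) => pow_nonneg hu0 j]

/-- The master combinatorial estimate over non-identity permutations. -/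
lemma perm_sum_le {M : ℕ} (θ : ℝ) (hθ0 : 0 ≤ θ) (hθ : (M : ℝ) * θ ≤ 1/2) :
    ∑ τ ∈ (univ : Finset (Equiv.Perm (Fin M))).erase 1, θ ^ τ.support.card ≤
      2 * ((M : ℝ) * θ) ^ 2 := by
  classical
  set E := (univ : Finset (Equiv.Perm (Fin M))).erase 1 with hE
  have hθ1 : θ ≤ 1/2 ∨ M = 0 := by
    rcases Nat.eq_zero_or_pos M with h | h
    · exact Or.inr h
    · left
      have : (1:ℝ) ≤ M := by exact_mod_cast h
      nlinarith
  -- group by support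
  have hfib := Finset.sum_fiberwise_of_maps_to
    (fun (τ : Equiv.Perm (Fin M)) (_ : τ ∈ E) =>
      Finset.mem_powerset.mpr (Finset.subset_univ τ.support))
    (fun τ => θ ^ τ.support.card)
  rw [← hfib]
  -- bound each fiber
  have hfiber : ∀ s ∈ (univ : Finset (Fin M)).powerset,
      (∑ τ ∈ E.filter (fun τ => τ.support = s), θ ^ τ.support.card) ≤
      (if 2 ≤ s.card then (s.card.factorial : ℝ) * θ ^ s.card else 0) := by
    intro s _
    by_cases h2 : 2 ≤ s.card
    · rw [if_pos h2]
      have heq : ∀ τ ∈ E.filter (fun τ => τ.support = s), θ ^ τ.support.card = θ ^ s.card := by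
        intro τ hτ
        rw [(Finset.mem_filter.mp hτ).2]
      rw [Finset.sum_congr rfl heq, Finset.sum_const, nsmul_eq_mul]
      apply mul_le_mul_of_nonneg_right _ (pow_nonneg hθ0 _)
      have hsub : E.filter (fun τ => τ.support = s) ⊆
          (univ : Finset (Equiv.Perm (Fin M))).filter (fun τ => τ.support ⊆ s) := by
        intro τ hτ
        rw [Finset.mem_filter]
        refine ⟨mem_univ _, ?_⟩
        rw [(Finset.mem_filter.mp hτ).2]
      calc ((E.filter (fun τ => τ.support = s)).card : ℝ)
          ≤ (((univ : Finset (Equiv.Perm (Fin M))).filter (fun τ => τ.support ⊆ s)).card : ℝ) := by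
            exact_mod_cast Finset.card_le_card hsub
        _ ≤ (s.card.factorial : ℝ) := by exact_mod_cast card_fixed_support s
    · rw [if_neg h2]
      have hempty : E.filter (fun τ => τ.support = s) = ∅ := by
        rw [Finset.filter_eq_empty_iff]
        intro τ hτ
        intro hss
        have hne : τ ≠ 1 := (Finset.mem_erase.mp (hE ▸ hτ)).1
        have hlt := Equiv.Perm.one_lt_card_support_of_ne_one hne
        rw [hss] at hlt
        omega
      rw [hempty, Finset.sum_empty]
  have step1 := Finset.sum_le_sum hfiber
  refine le_trans step1 ?_
  -- group by cardinality
  have hfib2 := Finset.sum_fiberwise_of_maps_to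
    (fun (s : Finset (Fin M)) (hs : s ∈ (univ : Finset (Fin M)).powerset) =>
      Finset.mem_range.mpr (Nat.lt_succ_of_le (Finset.card_le_card
        (Finset.mem_powerset.mp hs))))
    (fun s => (if 2 ≤ s.card then (s.card.factorial : ℝ) * θ ^ s.card else 0))
  rw [Finset.card_univ, Fintype.card_fin] at hfib2
  rw [← hfib2]
  have hfiber2 : ∀ k ∈ range (M + 1),
      (∑ s ∈ ((univ : Finset (Fin M)).powerset.filter (fun s => s.card = k)),
        (if 2 ≤ s.card then (s.card.factorial : ℝ) * θ ^ s.card else 0)) ≤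
      (if 2 ≤ k then ((M : ℝ) * θ) ^ k else 0) := by
    intro k hk
    have heq : ∀ s ∈ (univ : Finset (Fin M)).powerset.filter (fun s => s.card = k),
        (if 2 ≤ s.card then (s.card.factorial : ℝ) * θ ^ s.card else 0) =
        (if 2 ≤ k then (k.factorial : ℝ) * θ ^ k else 0) := by
      intro s hs
      rw [(Finset.mem_filter.mp hs).2]
    rw [Finset.sum_congr rfl heq, Finset.sum_const, nsmul_eq_mul]
    have hcard : ((univ : Finset (Fin M)).powerset.filter (fun s => s.card = k)).card =
        Nat.choose M k := by
      rw [← Finset.powersetCard_eq_filter, Finset.card_powersetCard, Finset.card_univ,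
        Fintype.card_fin]
    rw [hcard]
    by_cases h2 : 2 ≤ k
    · rw [if_pos h2, if_pos h2]
      have hd : (Nat.choose M k : ℝ) * (k.factorial : ℝ) ≤ (M : ℝ) ^ k := by
        have h1 : Nat.choose M k * k.factorial ≤ M ^ k := by
          have := Nat.descFactorial_le_pow M k
          rw [Nat.descFactorial_eq_factorial_mul_choose] at this
          exact le_trans (le_of_eq (Nat.mul_comm _ _)) this
        exact_mod_cast h1
      calc (Nat.choose M k : ℝ) * ((k.factorial : ℝ) * θ ^ k)
          = ((Nat.choose M k : ℝ) * (k.factorial : ℝ)) * θ ^ k := by ring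
        _ ≤ (M : ℝ) ^ k * θ ^ k :=
            mul_le_mul_of_nonneg_right hd (pow_nonneg hθ0 _)
        _ = ((M : ℝ) * θ) ^ k := (mul_pow _ _ _).symm
    · rw [if_neg h2, if_neg h2, mul_zero]
  refine le_trans (Finset.sum_le_sum hfiber2) ?_
  -- final geometric bound
  set u := (M : ℝ) * θ with hu
  have hu0 : 0 ≤ u := by
    rw [hu]; positivity
  have hsum : (∑ k ∈ range (M + 1), if 2 ≤ k then u ^ k else 0) =
      ∑ k ∈ Ico 2 (M + 1), u ^ k := by
    rw [← Finset.sum_filter]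
    congr 1
    ext k
    simp only [Finset.mem_filter, Finset.mem_range, Finset.mem_Ico]
    omega
  rw [hsum, Finset.sum_Ico_eq_sum_range]
  have : ∑ k ∈ range (M + 1 - 2), u ^ (2 + k) = u ^ 2 * ∑ k ∈ range (M + 1 - 2), u ^ k := by
    rw [Finset.mul_sum]
    exact Finset.sum_congr rfl fun k _ => by rw [pow_add]
  rw [this]
  have hg := geom_tail u hu0 hθ (M + 1 - 2)
  nlinarith [sq_nonneg u, pow_nonneg hu0 2]

end Count

end FP0Aux

/-- Theorem 1, `ξ = 0` case: if `β > 1/ψ₂(P_XY)` then there is `M₀`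
(depending only on `P_XY` and `β`) such that for all `M ≥ M₀`, with fragment length
`L = β·log M`, every maximum-likelihood reconstruction satisfies
`FP(ξ=0) ≤ 2·M^{2(1 - β·ψ₂(P_XY))}`. -/
theorem FP0_upper_bound {𝒳 𝒴 : Type*} [Fintype 𝒳] [Fintype 𝒴]
    (P : 𝒳 → ℝ) (W : 𝒳 → 𝒴 → ℝ)
    (hP : IsPMF P) (hPpos : ∀ x, 0 < P x) (hW : ∀ x, IsPMF (W x))
    (β : ℝ) (hβpos : 0 < β) (hβ : 1 / psi2 P W < β) :
    ∃ M₀ : ℕ, ∀ M : ℕ, M₀ ≤ M → ∀ L : ℕ, (L : ℝ) = β * Real.log M →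
      ∀ recon : (Fin M → Fin L → 𝒳) → (Fin M → Fin L → 𝒴) → (Fin M → Fin L → 𝒳),
        IsMLRecon W recon →
        FP0 P W recon ≤ 2 * (M : ℝ) ^ (2 * (1 - β * psi2 P W)) := by
  classical
  by_cases hψ : psi2 P W ≤ 0
  · refine ⟨1, ?_⟩
    intro M hM L hL recon hrec
    have hM1 : (1:ℝ) ≤ (M:ℝ) := by exact_mod_cast hM
    have hexp : (0:ℝ) ≤ 2 * (1 - β * psi2 P W) := by nlinarith
    have hge : (1:ℝ) ≤ (M:ℝ) ^ (2 * (1 - β * psi2 P W)) := by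
      calc (1:ℝ) = (1:ℝ) ^ (2 * (1 - β * psi2 P W)) := (Real.one_rpow _).symm
        _ ≤ (M:ℝ) ^ (2 * (1 - β * psi2 P W)) := Real.rpow_le_rpow zero_le_one hM1 hexp
    have h1 := FP0Aux.FP0_le_one hP hW recon
    linarith
  · push_neg at hψ
    have hβψ : 1 < β * psi2 P W := by
      rw [div_lt_iff₀ hψ] at hβ
      exact hβ
    set ψ := psi2 P W with hψdef
    set ε := β * ψ - 1 with hεdef
    have hεpos : 0 < ε := by rw [hεdef]; linarith
    refine ⟨⌈(2:ℝ) ^ (1/ε)⌉₊ + 2, ?_⟩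
    intro M hM L hL recon hrec
    have hM2 : 2 ≤ M := le_trans (by omega) hM
    have hMR1 : (1:ℝ) ≤ (M:ℝ) := by
      have : (1:ℕ) ≤ M := by omega
      exact_mod_cast this
    have hMpos : (0:ℝ) < (M:ℝ) := lt_of_lt_of_le one_pos hMR1
    set θ := FP0Aux.lam P W ^ L with hθdef
    have hθ0 : 0 ≤ θ := pow_nonneg FP0Aux.lam_nonneg L
    have hθle : θ ≤ (M:ℝ) ^ (-(β * ψ)) := by
      have h1 : FP0Aux.lam P W ≤ Real.exp (-ψ) := FP0Aux.lam_le_exp hP hPpos hW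
      have h2 : θ ≤ Real.exp (-ψ) ^ L := by
        rw [hθdef]
        exact pow_le_pow_left₀ FP0Aux.lam_nonneg h1 L
      have h3 : Real.exp (-ψ) ^ L = Real.exp ((L:ℝ) * (-ψ)) := (Real.exp_nat_mul _ L).symm
      have h4 : (L:ℝ) * (-ψ) = Real.log M * (-(β * ψ)) := by rw [hL]; ring
      have h5 : (M:ℝ) ^ (-(β * ψ)) = Real.exp (Real.log M * (-(β * ψ))) :=
        Real.rpow_def_of_pos hMpos _
      rw [h5, ← h4, ← h3]
      exact h2
    have hMθ : (M:ℝ) * θ ≤ (M:ℝ) ^ (-ε) := by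
      have h1 : (M:ℝ) * θ ≤ (M:ℝ) * (M:ℝ) ^ (-(β * ψ)) :=
        mul_le_mul_of_nonneg_left hθle hMpos.le
      have h2 : (M:ℝ) * (M:ℝ) ^ (-(β * ψ)) = (M:ℝ) ^ (-ε) := by
        rw [show -ε = 1 + -(β * ψ) by rw [hεdef]; ring, Real.rpow_add hMpos,
          Real.rpow_one]
      rw [← h2]
      exact h1
    have hhalf : (M:ℝ) ^ (-ε) ≤ 1/2 := by
      have hceil : (2:ℝ) ^ (1/ε) ≤ (M:ℝ) := by
        refine le_trans (Nat.le_ceil _) ?_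
        have : (⌈(2:ℝ) ^ (1/ε)⌉₊ : ℕ) ≤ M := by omega
        exact_mod_cast this
      have hid : ((2:ℝ) ^ (1/ε)) ^ ε = 2 := by
        rw [← Real.rpow_mul (by norm_num : (0:ℝ) ≤ 2), one_div_mul_cancel (ne_of_gt hεpos),
          Real.rpow_one]
      have h2M : (2:ℝ) ≤ (M:ℝ) ^ ε := by
        rw [← hid]
        exact Real.rpow_le_rpow (Real.rpow_nonneg (by norm_num) _) hceil hεpos.le
      have hpos : 0 < (M:ℝ) ^ ε := Real.rpow_pos_of_pos hMpos _
      rw [Real.rpow_neg hMpos.le]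
      have hinv := mul_inv_cancel₀ (ne_of_gt hpos)
      nlinarith [inv_nonneg.mpr hpos.le]
    have hMθhalf : (M:ℝ) * θ ≤ 1/2 := le_trans hMθ hhalf
    have hchain := FP0Aux.FP0_le_sum hP hPpos hW recon hrec
    have hperτ : ∀ τ ∈ (univ : Finset (Equiv.Perm (Fin M))).erase 1,
        FP0Aux.Sg P W τ ^ L ≤ θ ^ τ.support.card := by
      intro τ _
      have h1 : FP0Aux.Sg P W τ ≤ FP0Aux.lam P W ^ τ.support.card :=
        (FP0Aux.main_bound hP hPpos hW τ.support.card τ le_rfl).1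
      calc FP0Aux.Sg P W τ ^ L ≤ (FP0Aux.lam P W ^ τ.support.card) ^ L :=
            pow_le_pow_left₀ (FP0Aux.Sg_nonneg hP.1 τ) h1 L
        _ = θ ^ τ.support.card := by
            rw [hθdef, ← pow_mul, ← pow_mul, Nat.mul_comm]
    have hsum := FP0Aux.perm_sum_le θ hθ0 hMθhalf
    have hfinal : 2 * ((M:ℝ) * θ) ^ 2 ≤ 2 * (M:ℝ) ^ (2 * (1 - β * ψ)) := by
      have h1 : ((M:ℝ) * θ) ^ 2 ≤ ((M:ℝ) ^ (-ε)) ^ 2 :=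
        pow_le_pow_left₀ (mul_nonneg hMpos.le hθ0) hMθ 2
      have h2 : ((M:ℝ) ^ (-ε)) ^ 2 = (M:ℝ) ^ (2 * (1 - β * ψ)) := by
        rw [← Real.rpow_natCast ((M:ℝ) ^ (-ε)) 2, ← Real.rpow_mul hMpos.le]
        congr 1
        push_cast
        rw [hεdef]
        ring
      linarith
    calc FP0 P W recon ≤
          ∑ τ ∈ (univ : Finset (Equiv.Perm (Fin M))).erase 1, FP0Aux.Sg P W τ ^ L := hchain
      _ ≤ ∑ τ ∈ (univ : Finset (Equiv.Perm (Fin M))).erase 1, θ ^ τ.support.card :=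
          Finset.sum_le_sum hperτ
      _ ≤ 2 * ((M:ℝ) * θ) ^ 2 := hsum
      _ ≤ 2 * (M:ℝ) ^ (2 * (1 - β * ψ)) := hfinal
end
end
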